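/- arXiv:1803.07872 — 3 statements merged into one kernel-verified Lean document; each statement's English description precedes it below -/
import Mathlib

section
/- State-constraint property of the modified control β̃ (point iii) of Assumption 2, Section 7): let Ω_Y = {y : ξ·y > 0} and assume there exist b₀ ∈ B, ζ > 0 and r > 0 such that g(y,b₀)·ξ ≥ ζ for all y ∈ Ω̄_Y with ξ·y ≤ r. Then there exist k_Y > 0 and t*_Y > 0, depending only on g (through its bound M and Lipschitz constant L), ζ and r, such that for all y₁, y₂ ∈ Ω̄_Y and every measurable control β, the control β̃ (obtained from β by inserting the inward control b₀ for a time of length k_Y ε_Y at the first instant the trajectory from y₂ hits ∂Ω_Y, and then time-shifting β) satisfies Y(t;y₂,β̃) ∈ Ω̄_Y for all t ∈ [0, min{τ_Y(y₁,β), t*_Y}]; in particular τ_Y(y₂,β̃) ≥ min{τ_Y(y₁,β), t*_Y}. -/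
open MeasureTheory Set RealInnerProductSpace
open scoped ENNReal

noncomputable section

/-- Euclidean space `ℝ^k`. -/
abbrev Euc (k : ℕ) : Type := EuclideanSpace ℝ (Fin k)

/-- A measurable control with values in the compact set `A`. -/
def IsControl {k' : ℕ} (A : Set (Euc k')) (u : ℝ → Euc k') : Prop :=
  Measurable u ∧ ∀ t, u t ∈ A

/-- `Z` is the (absolutely continuous, i.e. integral) solution of
`Z' = f(Z, u(t))`, `Z(0) = z0`, on `[0, ∞)`. -/
def IsTrajectory {k k' : ℕ} (f : Euc k → Euc k' → Euc k)
    (z0 : Euc k) (u : ℝ → Euc k') (Z : ℝ → Euc k) : Prop :=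
  ContinuousOn Z (Ici (0:ℝ)) ∧ Z 0 = z0 ∧
    ∀ t : ℝ, 0 ≤ t → Z t = z0 + ∫ s in Ioc (0:ℝ) t, f (Z s) (u s)

/-- First exit time of the curve `Z` from `closure Ω` (with `inf ∅ = +∞`). -/
def exitTime {k : ℕ} (Ω : Set (Euc k)) (Z : ℝ → Euc k) : ℝ≥0∞ :=
  sInf (ENNReal.ofReal '' {t : ℝ | 0 ≤ t ∧ Z t ∉ closure Ω})

/-- Integral of the discounted running cost up to time `T`. -/
def costUpTo {n m n' m' : ℕ}
    (ℓ : Euc n → Euc m → Euc n' → Euc m' → ℝ) (lam : ℝ)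
    (X : ℝ → Euc n) (Y : ℝ → Euc m) (α : ℝ → Euc n') (β : ℝ → Euc m')
    (T : ℝ) : ℝ :=
  ∫ t in Ioc (0:ℝ) T, Real.exp (-lam * t) * ℓ (X t) (Y t) (α t) (β t)

/-- Total cost of the exit-time game: discounted running cost up to the
first exit time `τ = min(τ_X, τ_Y)` plus the discounted exit cost, which is
`ψX` if only `X` exits first, `ψY` if only `Y` exits first, `ψXY` if both
exit simultaneously, and `0` if no one ever exits. -/
def costJ {n m n' m' : ℕ} (ΩX : Set (Euc n)) (ΩY : Set (Euc m))
    (ℓ : Euc n → Euc m → Euc n' → Euc m' → ℝ) (lam : ℝ)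
    (ψX ψY ψXY : Euc n → Euc m → ℝ)
    (X : ℝ → Euc n) (Y : ℝ → Euc m) (α : ℝ → Euc n') (β : ℝ → Euc m') : ℝ :=
  let τX := exitTime ΩX X
  let τY := exitTime ΩY Y
  let τ := min τX τY
  if τ = ⊤ then ∫ t in Ioi (0:ℝ), Real.exp (-lam * t) * ℓ (X t) (Y t) (α t) (β t)
  else costUpTo ℓ lam X Y α β τ.toReal +
    Real.exp (-lam * τ.toReal) *
      (if τX < τY then ψX (X τ.toReal) (Y τ.toReal)
       else if τY < τX then ψY (X τ.toReal) (Y τ.toReal)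
       else ψXY (X τ.toReal) (Y τ.toReal))

/-- `u = v` almost everywhere on the time interval `[0, t]`. -/
def AEEqOn {E : Type*} (u v : ℝ → E) (t : ℝ) : Prop :=
  ∀ᵐ s ∂(volume.restrict (Icc (0:ℝ) t)), u s = v s

/-- Elliot–Kalton non-anticipating strategy mapping controls valued in `B`
to controls valued in `A`. -/
def NonAnticipating {k' l' : ℕ} (A : Set (Euc k')) (B : Set (Euc l'))
    (γ : (ℝ → Euc l') → ℝ → Euc k') : Prop :=
  (∀ β, IsControl B β → IsControl A (γ β)) ∧
  ∀ t : ℝ, 0 ≤ t → ∀ β₁ β₂, IsControl B β₁ → IsControl B β₂ →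
    AEEqOn β₁ β₂ t → AEEqOn (γ β₁) (γ β₂) t

/-- The lower value function `V̲(x,y) = inf_γ sup_β J(x,y,γ[β],β)`. -/
def lowerValue {n m n' m' : ℕ} (ΩX : Set (Euc n)) (ΩY : Set (Euc m))
    (A : Set (Euc n')) (B : Set (Euc m'))
    (ℓ : Euc n → Euc m → Euc n' → Euc m' → ℝ) (lam : ℝ)
    (ψX ψY ψXY : Euc n → Euc m → ℝ)
    (trajX : Euc n → (ℝ → Euc n') → ℝ → Euc n)
    (trajY : Euc m → (ℝ → Euc m') → ℝ → Euc m)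
    (x : Euc n) (y : Euc m) : ℝ :=
  ⨅ γ : {γ : (ℝ → Euc m') → ℝ → Euc n' // NonAnticipating A B γ},
    ⨆ β : {β : ℝ → Euc m' // IsControl B β},
      costJ ΩX ΩY ℓ lam ψX ψY ψXY (trajX x (γ.1 β.1)) (trajY y β.1) (γ.1 β.1) β.1

/-- The upper value function `V̄(x,y) = sup_ξ inf_α J(x,y,α,ξ[α])`. -/
def upperValue {n m n' m' : ℕ} (ΩX : Set (Euc n)) (ΩY : Set (Euc m))
    (A : Set (Euc n')) (B : Set (Euc m'))
    (ℓ : Euc n → Euc m → Euc n' → Euc m' → ℝ) (lam : ℝ)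
    (ψX ψY ψXY : Euc n → Euc m → ℝ)
    (trajX : Euc n → (ℝ → Euc n') → ℝ → Euc n)
    (trajY : Euc m → (ℝ → Euc m') → ℝ → Euc m)
    (x : Euc n) (y : Euc m) : ℝ :=
  ⨆ ξ : {ξ : (ℝ → Euc n') → ℝ → Euc m' // NonAnticipating B A ξ},
    ⨅ α : {α : ℝ → Euc n' // IsControl A α},
      costJ ΩX ΩY ℓ lam ψX ψY ψXY (trajX x α.1) (trajY y (ξ.1 α.1)) α.1 (ξ.1 α.1)

/-- The upper Hamiltonian `UH(x,y,p,q) = min_b max_a {−f·p − g·q − ℓ}`. -/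
def UH {n m n' m' : ℕ} (A : Set (Euc n')) (B : Set (Euc m'))
    (f : Euc n → Euc n' → Euc n) (g : Euc m → Euc m' → Euc m)
    (ℓ : Euc n → Euc m → Euc n' → Euc m' → ℝ)
    (x : Euc n) (y : Euc m) (p : Euc n) (q : Euc m) : ℝ :=
  sInf ((fun b => sSup ((fun a => -(inner ℝ (f x a) p : ℝ) - (inner ℝ (g y b) q : ℝ) - ℓ x y a b) '' A)) '' B)

/-- The lower Hamiltonian `LH(x,y,p,q) = max_a min_b {−f·p − g·q − ℓ}`. -/
def LH {n m n' m' : ℕ} (A : Set (Euc n')) (B : Set (Euc m'))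
    (f : Euc n → Euc n' → Euc n) (g : Euc m → Euc m' → Euc m)
    (ℓ : Euc n → Euc m → Euc n' → Euc m' → ℝ)
    (x : Euc n) (y : Euc m) (p : Euc n) (q : Euc m) : ℝ :=
  sSup ((fun a => sInf ((fun b => -(inner ℝ (f x a) p : ℝ) - (inner ℝ (g y b) q : ℝ) - ℓ x y a b) '' B)) '' A)

/-- Partial gradient in the `x` variable. -/
def gradX {n m : ℕ} (φ : Euc n → Euc m → ℝ) (x : Euc n) (y : Euc m) : Euc n :=
  gradient (fun x' => φ x' y) x

/-- Partial gradient in the `y` variable. -/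
def gradY {n m : ℕ} (φ : Euc n → Euc m → ℝ) (x : Euc n) (y : Euc m) : Euc m :=
  gradient (fun y' => φ x y') y

/-- Viscosity subsolution of `λ u + H(x,y,u_x,u_y) = 0` on `Ω̄_X × Ω̄_Y` with
the exit-cost boundary conditions in the viscosity sense. -/
def IsViscositySubsol {n m : ℕ} (ΩX : Set (Euc n)) (ΩY : Set (Euc m))
    (H : Euc n → Euc m → Euc n → Euc m → ℝ) (lam : ℝ)
    (ψX ψY : Euc n → Euc m → ℝ) (u : Euc n → Euc m → ℝ) : Prop :=
  ∀ φ : Euc n → Euc m → ℝ, ContDiff ℝ 1 (fun p : Euc n × Euc m => φ p.1 p.2) →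
  ∀ x₀ : Euc n, ∀ y₀ : Euc m, (x₀, y₀) ∈ (closure ΩX) ×ˢ (closure ΩY) →
  IsLocalMaxOn (fun p : Euc n × Euc m => u p.1 p.2 - φ p.1 p.2)
    ((closure ΩX) ×ˢ (closure ΩY)) (x₀, y₀) →
  ((x₀ ∈ ΩX ∧ y₀ ∈ ΩY) ∨
   (x₀ ∈ frontier ΩX ∧ y₀ ∈ ΩY ∧ ψX x₀ y₀ < u x₀ y₀) ∨
   (x₀ ∈ ΩX ∧ y₀ ∈ frontier ΩY ∧ ψY x₀ y₀ < u x₀ y₀) ∨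
   (x₀ ∈ frontier ΩX ∧ y₀ ∈ frontier ΩY ∧ u x₀ y₀ ≠ ψX x₀ y₀ ∧ ψY x₀ y₀ < u x₀ y₀)) →
  lam * u x₀ y₀ + H x₀ y₀ (gradX φ x₀ y₀) (gradY φ x₀ y₀) ≤ 0

/-- Viscosity supersolution of `λ u + H(x,y,u_x,u_y) = 0` on `Ω̄_X × Ω̄_Y` with
the exit-cost boundary conditions in the viscosity sense. -/
def IsViscositySupersol {n m : ℕ} (ΩX : Set (Euc n)) (ΩY : Set (Euc m))
    (H : Euc n → Euc m → Euc n → Euc m → ℝ) (lam : ℝ)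
    (ψX ψY : Euc n → Euc m → ℝ) (u : Euc n → Euc m → ℝ) : Prop :=
  ∀ φ : Euc n → Euc m → ℝ, ContDiff ℝ 1 (fun p : Euc n × Euc m => φ p.1 p.2) →
  ∀ x₀ : Euc n, ∀ y₀ : Euc m, (x₀, y₀) ∈ (closure ΩX) ×ˢ (closure ΩY) →
  IsLocalMinOn (fun p : Euc n × Euc m => u p.1 p.2 - φ p.1 p.2)
    ((closure ΩX) ×ˢ (closure ΩY)) (x₀, y₀) →
  ((x₀ ∈ ΩX ∧ y₀ ∈ ΩY) ∨
   (x₀ ∈ frontier ΩX ∧ y₀ ∈ ΩY ∧ u x₀ y₀ < ψX x₀ y₀) ∨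
   (x₀ ∈ ΩX ∧ y₀ ∈ frontier ΩY ∧ u x₀ y₀ < ψY x₀ y₀) ∨
   (x₀ ∈ frontier ΩX ∧ y₀ ∈ frontier ΩY ∧ u x₀ y₀ ≠ ψY x₀ y₀ ∧ u x₀ y₀ < ψX x₀ y₀)) →
  0 ≤ lam * u x₀ y₀ + H x₀ y₀ (gradX φ x₀ y₀) (gradY φ x₀ y₀)

/-- `d` is a `C²` defining function for the domain `Ω` (encoding the `C²`
regularity of the boundary): `Ω = {d > 0}`, `Ω̄ = {d ≥ 0}`, `∇d ≠ 0` on `∂Ω`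
(`∇d` points inward). -/
def HasSmoothBoundaryData {k : ℕ} (Ω : Set (Euc k)) (d : Euc k → ℝ) : Prop :=
  ContDiff ℝ 2 d ∧ Ω = {z | 0 < d z} ∧ closure Ω = {z | 0 ≤ d z} ∧
    ∀ z ∈ frontier Ω, gradient d z ≠ 0

/-- Assumption 1 (controllability on the boundary): at every boundary point
there are a constant control whose dynamics strictly enters `Ω` and one whose
dynamics strictly exits `closure Ω` (inner ℝ products with the inward gradient
of the defining function `d`). -/
def Controllability {k k' : ℕ} (Ω : Set (Euc k)) (d : Euc k → ℝ)
    (U : Set (Euc k')) (f : Euc k → Euc k' → Euc k) : Prop :=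
  ∀ z ∈ frontier Ω, (∃ a₁ ∈ U, 0 < (inner ℝ (f z a₁) (gradient d z) : ℝ)) ∧
    (∃ a₂ ∈ U, (inner ℝ (f z a₂) (gradient d z) : ℝ) < 0)

/-- A modulus of continuity: continuous, increasing, vanishing at `0`,
nonnegative. -/
def IsModulus (ω : ℝ → ℝ) : Prop :=
  Continuous ω ∧ MonotoneOn ω (Ici (0:ℝ)) ∧ ω 0 = 0 ∧ ∀ r, 0 ≤ ω r

/-- One half (item I) of Assumption 2: existence of state-constraint
non-anticipating tunings/strategies with the estimates i)–vi). The other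
half is obtained by exchanging the roles of the two players. -/
def Assumption2Part {n m n' m' : ℕ} (ΩX : Set (Euc n)) (ΩY : Set (Euc m))
    (A : Set (Euc n')) (B : Set (Euc m'))
    (ℓ : Euc n → Euc m → Euc n' → Euc m' → ℝ) (lam : ℝ)
    (trajX : Euc n → (ℝ → Euc n') → ℝ → Euc n)
    (trajY : Euc m → (ℝ → Euc m') → ℝ → Euc m) : Prop :=
  ∀ T : ℝ, 0 < T → ∀ K : Set (Euc n × Euc m), IsCompact K →
    K ⊆ (closure ΩX) ×ˢ (closure ΩY) →
    ∃ O : ℝ → ℝ, IsModulus O ∧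
    ∀ x₁ y₁ x₂ y₂, (x₁, y₁) ∈ K → (x₂, y₂) ∈ K →
    ∃ tune : (ℝ → Euc m') → ℝ → Euc m',
    ∃ lift : ((ℝ → Euc m') → ℝ → Euc n') → (ℝ → Euc m') → ℝ → Euc n',
      (∀ β, IsControl B β → IsControl B (tune β)) ∧
      (∀ γ, NonAnticipating A B γ → NonAnticipating A B (lift γ)) ∧
      (∀ t : ℝ, 0 ≤ t → ∀ β₁ β₂, IsControl B β₁ → IsControl B β₂ →
        AEEqOn β₁ β₂ t → AEEqOn (tune β₁) (tune β₂) t) ∧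
      (∀ γ, NonAnticipating A B γ → ∀ β, IsControl B β →
        exitTime ΩX (trajX x₂ (γ β)) ≤ exitTime ΩX (trajX x₁ (lift γ β)) ∧
        exitTime ΩY (trajY y₁ β) ≤ exitTime ΩY (trajY y₂ (tune β)) ∧
        (let τt : ℝ := (min (min (exitTime ΩX (trajX x₂ (γ (tune β))))
            (exitTime ΩY (trajY y₁ β))) (ENNReal.ofReal T)).toReal
         ‖trajX x₁ (lift γ β) τt - trajX x₂ (γ β) τt‖ ≤ O ‖x₁ - x₂‖ ∧
         ‖trajY y₁ β τt - trajY y₂ (tune β) τt‖ ≤ O ‖y₁ - y₂‖ ∧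
         |costUpTo ℓ lam (trajX x₁ (lift γ (tune β))) (trajY y₁ β)
              (lift γ (tune β)) β τt -
            costUpTo ℓ lam (trajX x₂ (γ (tune β))) (trajY y₂ (tune β))
              (γ (tune β)) (tune β) τt|
            ≤ O (‖x₁ - x₂‖ + ‖y₁ - y₂‖)))


/-- First hitting time of the set `C` by the curve `Z` (with `inf ∅ = +∞`). -/
def hittingTime {k : ℕ} (C : Set (Euc k)) (Z : ℝ → Euc k) : ℝ≥0∞ :=
  sInf (ENNReal.ofReal '' {t : ℝ | 0 ≤ t ∧ Z t ∈ C})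

/-- First hitting time of the boundary of `Ω` by `Z`, capped at `tcap`
(as a real number). -/
def hitBdryTime {k : ℕ} (Ω : Set (Euc k)) (Z : ℝ → Euc k) (tcap : ℝ) : ℝ :=
  (min (hittingTime (frontier Ω) Z) (ENNReal.ofReal tcap)).toReal

/-- The constraint-violation error `ε_Y` (formula (22)): the supremum over
ALL controls `β` and all times `t ≤ min{τ_Y(y₁,β), t*}` of the distance
`(−ξ·Y(t;y₂,β))⁺` of `Y(t;y₂,β)` from the half-space `Ω̄_Y = {ξ·y ≥ 0}`. -/
def epsY {m m' : ℕ} (B : Set (Euc m')) (ΩY : Set (Euc m)) (ξ : Euc m)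
    (Ytraj : Euc m → (ℝ → Euc m') → ℝ → Euc m)
    (y₁ y₂ : Euc m) (tstar : ℝ) : ℝ :=
  ⨆ β : {β : ℝ → Euc m' // IsControl B β},
    ⨆ t : {t : ℝ // 0 ≤ t ∧ ENNReal.ofReal t ≤
        min (exitTime ΩY (Ytraj y₁ β.1)) (ENNReal.ofReal tstar)},
      max (-(inner ℝ ξ (Ytraj y₂ β.1 t.1) : ℝ)) 0

/-- The Soner-type non-anticipating modification `β̃` of the control `β`
(formula (25)): follow `β` until the trajectory from `y₂` first hits `∂Ω_Y`
(capped at `t*`), then insert the inward control `sel(⋅)` for a time of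
length `k_Y ε_Y`, then follow `β` time-shifted by `k_Y ε_Y`. -/
def modControl {m m' : ℕ} (B : Set (Euc m')) (ΩY : Set (Euc m)) (ξ : Euc m)
    (Ytraj : Euc m → (ℝ → Euc m') → ℝ → Euc m) (sel : Euc m → Euc m')
    (y₁ y₂ : Euc m) (kY tstar : ℝ) (β : ℝ → Euc m') : ℝ → Euc m' :=
  let ε := epsY B ΩY ξ Ytraj y₁ y₂ tstar
  let t0 := hitBdryTime ΩY (Ytraj y₂ β) tstar
  fun t => if t ≤ t0 then β t
    else if t ≤ t0 + kY * ε then sel (Ytraj y₂ β t0)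
    else β (t - kY * ε)

/-- Integral solution of the weakly decoupled control-affine system
`X' = f(X) + α(t) + D β(t)`, `X(0) = x` (equation (21)). -/
def IsTrajectoryAffine {n m' : ℕ} (f : Euc n → Euc n) (D : Euc m' →L[ℝ] Euc n)
    (x : Euc n) (α : ℝ → Euc n) (β : ℝ → Euc m') (X : ℝ → Euc n) : Prop :=
  ContinuousOn X (Ici (0:ℝ)) ∧ X 0 = x ∧
    ∀ t : ℝ, 0 ≤ t → X t = x + ∫ s in Ioc (0:ℝ) t, (f (X s) + α s + D (β s))

/-- The constraint-violation error `ε_X` (formula (26)): supremum over ALL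
non-anticipating strategies `γ`, ALL controls `β` and all times
`t ≤ min{τ_X(x₂,γ[β̃],β̃), t*_X}` of `(−ξ·X(t;x₁,γ[β̃],β))⁺`, where `β̃`
denotes the tuned control `tune β`. -/
def epsX {n m' : ℕ} (A : Set (Euc n)) (B : Set (Euc m'))
    (ΩX : Set (Euc n)) (ξ : Euc n)
    (XT : Euc n → (ℝ → Euc n) → (ℝ → Euc m') → ℝ → Euc n)
    (tune : (ℝ → Euc m') → ℝ → Euc m')
    (x₁ x₂ : Euc n) (tX : ℝ) : ℝ :=
  ⨆ γ : {γ : (ℝ → Euc m') → ℝ → Euc n // NonAnticipating A B γ},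
    ⨆ β : {β : ℝ → Euc m' // IsControl B β},
      ⨆ t : {t : ℝ // 0 ≤ t ∧ ENNReal.ofReal t ≤
          min (exitTime ΩX (XT x₂ (γ.1 (tune β.1)) (tune β.1)))
            (ENNReal.ofReal tX)},
        max (-(inner ℝ ξ (XT x₁ (γ.1 (tune β.1)) β.1 t.1) : ℝ)) 0

/-- The control produced by the Soner-type non-anticipating modification
`γ̃` of the strategy `γ` (formula (29)), acting against the tuned control
`β̃ = tune β`: follow `γ[β̃]` until the trajectory `X(⋅;x₁,γ[β̃],β)` first
hits `∂Ω_X` (capped at `t*_X`), then insert the inward control `a₀` for a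
time of length `k_X ε`, then follow `γ[β̃]` time-shifted by `k_X ε`. -/
def modStratControl {n m' : ℕ} (ΩX : Set (Euc n))
    (XT : Euc n → (ℝ → Euc n) → (ℝ → Euc m') → ℝ → Euc n)
    (tune : (ℝ → Euc m') → ℝ → Euc m')
    (γ : (ℝ → Euc m') → ℝ → Euc n) (x₁ : Euc n) (a₀ : Euc n)
    (kX tX ε : ℝ) (β : ℝ → Euc m') : ℝ → Euc n :=
  let t0 := hitBdryTime ΩX (XT x₁ (γ (tune β)) β) tX
  fun t => if t ≤ t0 then γ (tune β) t
    else if t ≤ t0 + kX * ε then a₀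
    else γ (tune β) (t - kX * ε)


/-- Auxiliary: the closure of the open half-space. -/
lemma my_closure_halfspace {m : ℕ} (ξ : Euc m) (hξ : ‖ξ‖ = 1) :
    closure {y : Euc m | 0 < (inner ℝ ξ y : ℝ)} = {y | 0 ≤ (inner ℝ ξ y : ℝ)} := by
  apply subset_antisymm
  · refine closure_minimal (fun y hy => le_of_lt (show (0:ℝ) < inner ℝ ξ y from hy)) ?_
    have : {y : Euc m | 0 ≤ (inner ℝ ξ y : ℝ)} = (fun y => (inner ℝ ξ y : ℝ)) ⁻¹' Ici 0 := rfl
    rw [this]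
    exact isClosed_Ici.preimage (continuous_const.inner continuous_id)
  · intro y hy
    have htend : Filter.Tendsto (fun n : ℕ => y + ((n : ℝ) + 1)⁻¹ • ξ) Filter.atTop (nhds y) := by
      have h0 : Filter.Tendsto (fun n : ℕ => ((n : ℝ) + 1)⁻¹) Filter.atTop (nhds 0) :=
        tendsto_one_div_add_atTop_nhds_zero_nat.congr (fun n => by rw [one_div])
      have := (h0.smul_const ξ).const_add y
      simpa using this
    refine mem_closure_of_tendsto htend (Filter.Eventually.of_forall fun n => ?_)
    have : (inner ℝ ξ (y + ((n : ℝ) + 1)⁻¹ • ξ) : ℝ)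
        = inner ℝ ξ y + ((n : ℝ) + 1)⁻¹ * ‖ξ‖ ^ 2 := by
      rw [inner_add_right, real_inner_smul_right, real_inner_self_eq_norm_sq]
    have hpos : (0:ℝ) < ((n : ℝ) + 1)⁻¹ := by positivity
    simp only [Set.mem_setOf_eq, this, hξ]
    have hy' : (0:ℝ) ≤ inner ℝ ξ y := hy
    nlinarith [hy']

/-- Auxiliary: the frontier of the open half-space. -/
lemma my_frontier_halfspace {m : ℕ} (ξ : Euc m) (hξ : ‖ξ‖ = 1) :
    frontier {y : Euc m | 0 < (inner ℝ ξ y : ℝ)} = {y | (inner ℝ ξ y : ℝ) = 0} := by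
  have hopen : IsOpen {y : Euc m | 0 < (inner ℝ ξ y : ℝ)} := by
    have : {y : Euc m | 0 < (inner ℝ ξ y : ℝ)} = (fun y => (inner ℝ ξ y : ℝ)) ⁻¹' Ioi 0 := rfl
    rw [this]
    exact isOpen_Ioi.preimage (continuous_const.inner continuous_id)
  rw [hopen.frontier_eq, my_closure_halfspace ξ hξ]
  ext y
  simp only [Set.mem_diff, Set.mem_setOf_eq]
  constructor
  · rintro ⟨h1, h2⟩; rcases lt_or_ge 0 (inner ℝ ξ y : ℝ) with h | h
    · exact absurd h h2
    · linarith
  · rintro h; exact ⟨le_of_eq h.symm, by simp [h]⟩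

/-- Auxiliary: boundedness and measurability imply integrability on `Ioc`. -/
lemma my_integrableOn_g {m m' : ℕ} {g : Euc m → Euc m' → Euc m} {M : ℝ}
    (hgc : Continuous fun p : Euc m × Euc m' => g p.1 p.2)
    (hgb : ∀ y b, ‖g y b‖ ≤ M)
    {Z : ℝ → Euc m} {u : ℝ → Euc m'} {a b : ℝ}
    (hZ : ContinuousOn Z (Ioc a b)) (hu : Measurable u) :
    IntegrableOn (fun s => g (Z s) (u s)) (Ioc a b) := by
  have hfin : volume (Ioc a b) < ⊤ := measure_Ioc_lt_top
  haveI : IsFiniteMeasure (volume.restrict (Ioc a b)) :=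
    ⟨by rwa [Measure.restrict_apply_univ]⟩
  have hZm : AEMeasurable Z (volume.restrict (Ioc a b)) :=
    hZ.aemeasurable measurableSet_Ioc
  have hmeas : AEStronglyMeasurable (fun s => g (Z s) (u s))
      (volume.restrict (Ioc a b)) := by
    have h1 : AEMeasurable (fun s => (Z s, u s)) (volume.restrict (Ioc a b)) :=
      hZm.prodMk hu.aemeasurable
    exact (hgc.measurable.comp_aemeasurable h1).aestronglyMeasurable
  exact Integrable.mono' (integrable_const M) hmeas
    (Filter.Eventually.of_forall fun s => hgb _ _)

/-- Auxiliary: Gronwall inequality in integral form. -/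
lemma my_gronwall {Δ : ℝ → ℝ} {c T a K : ℝ} (hcT : c ≤ T) (ha : 0 ≤ a) (hK : 0 < K)
    (hcont : ContinuousOn Δ (Icc c T))
    (hineq : ∀ t ∈ Icc c T, Δ t ≤ a + K * ∫ s in c..t, Δ s) :
    ∀ t ∈ Icc c T, Δ t ≤ a * Real.exp (K * (t - c)) := by
  set F : ℝ → ℝ := fun t => ∫ s in c..t, Δ s with hF
  have hFcont : ContinuousOn F (Icc c T) := by
    have h1 : ContinuousOn F (uIcc c T) :=
      intervalIntegral.continuousOn_primitive_interval'
        ((show ContinuousOn Δ (uIcc c T) by rwa [uIcc_of_le hcT]).intervalIntegrable)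
        left_mem_uIcc
    rwa [uIcc_of_le hcT] at h1
  have hFderiv : ∀ x ∈ Ioo c T, HasDerivAt F (Δ x) x := by
    intro x hx
    have hxIcc : Icc c T ∈ nhds x := Icc_mem_nhds hx.1 hx.2
    apply intervalIntegral.integral_hasDerivAt_right
    · exact (show ContinuousOn Δ (uIcc c x) by
        rw [uIcc_of_le hx.1.le]
        exact hcont.mono (Icc_subset_Icc le_rfl hx.2.le)).intervalIntegrable
    · exact ⟨Icc c T, hxIcc, hcont.aestronglyMeasurable measurableSet_Icc⟩
    · exact hcont.continuousAt hxIcc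
  set φ : ℝ → ℝ := fun t => (a + K * F t) * Real.exp (-K * t) with hφ
  have hφanti : AntitoneOn φ (Icc c T) := by
    apply antitoneOn_of_deriv_nonpos (convex_Icc c T)
    · exact ((continuousOn_const.add (continuousOn_const.mul hFcont)).mul
        (Real.continuous_exp.comp (continuous_const.mul continuous_id)).continuousOn)
    · intro x hx
      rw [interior_Icc] at hx
      have h1 : HasDerivAt (fun t => a + K * F t) (K * Δ x) x :=
        ((hFderiv x hx).const_mul K).const_add a
      have h2 : HasDerivAt (fun t => Real.exp (-K * t)) (Real.exp (-K * x) * (-K)) x := by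
        have := ((hasDerivAt_id x).const_mul (-K)).exp
        simpa using this
      exact ((h1.mul h2).differentiableAt).differentiableWithinAt
    · intro x hx
      rw [interior_Icc] at hx
      have h1 : HasDerivAt (fun t => a + K * F t) (K * Δ x) x :=
        ((hFderiv x hx).const_mul K).const_add a
      have h2 : HasDerivAt (fun t => Real.exp (-K * t)) (Real.exp (-K * x) * (-K)) x := by
        have := ((hasDerivAt_id x).const_mul (-K)).exp
        simpa using this
      have h3 : HasDerivAt φ
          (K * Δ x * Real.exp (-K * x) + (a + K * F x) * (Real.exp (-K * x) * (-K))) x :=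
        h1.mul h2
      rw [h3.deriv]
      have h4 : Δ x ≤ a + K * F x := hineq x ⟨hx.1.le, hx.2.le⟩
      have h5 : (0:ℝ) < Real.exp (-K * x) := Real.exp_pos _
      nlinarith [mul_le_mul_of_nonneg_right (mul_le_mul_of_nonneg_left h4 hK.le) h5.le]
  intro t ht
  have h1 : φ t ≤ φ c := hφanti (left_mem_Icc.2 hcT) ht ht.1
  have hFc : F c = 0 := intervalIntegral.integral_same
  have h2 : Δ t ≤ a + K * F t := hineq t ht
  have h3 : (a + K * F t) * Real.exp (-K * t) ≤ a * Real.exp (-K * c) := by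
    simpa [hφ, hFc] using h1
  have h5 : (0:ℝ) < Real.exp (-K * t) := Real.exp_pos _
  have h6 : Real.exp (-K * c) / Real.exp (-K * t) = Real.exp (K * (t - c)) := by
    rw [← Real.exp_sub]; ring_nf
  have h7 : a + K * F t ≤ a * Real.exp (K * (t - c)) := by
    have h8 : (a + K * F t) ≤ a * Real.exp (-K * c) / Real.exp (-K * t) :=
      (le_div_iff₀ h5).2 h3
    calc a + K * F t ≤ a * Real.exp (-K * c) / Real.exp (-K * t) := h8
      _ = a * (Real.exp (-K * c) / Real.exp (-K * t)) := by ring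
      _ = a * Real.exp (K * (t - c)) := by rw [h6]
  linarith

/-- Auxiliary: increment identity for integral solutions. -/
lemma my_traj_sub {E : Type*} [NormedAddCommGroup E] [NormedSpace ℝ E]
    {Z : ℝ → E} {z0 : E} {G : ℝ → E} {a b : ℝ}
    (hid : ∀ t, 0 ≤ t → Z t = z0 + ∫ s in Ioc (0:ℝ) t, G s)
    (hint : IntegrableOn G (Ioc 0 b)) (ha : 0 ≤ a) (hab : a ≤ b) :
    Z b = Z a + ∫ s in Ioc a b, G s := by
  rw [hid b (ha.trans hab), hid a ha]
  have hsplit : Ioc (0:ℝ) a ∪ Ioc a b = Ioc 0 b := Ioc_union_Ioc_eq_Ioc ha hab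
  have hdisj : Disjoint (Ioc (0:ℝ) a) (Ioc a b) := Ioc_disjoint_Ioc_of_le le_rfl
  have h1 : ∫ s in Ioc (0:ℝ) b, G s
      = (∫ s in Ioc (0:ℝ) a, G s) + ∫ s in Ioc a b, G s := by
    rw [← hsplit]
    exact setIntegral_union hdisj measurableSet_Ioc
      (hint.mono_set (by rw [← hsplit]; exact subset_union_left))
      (hint.mono_set (by rw [← hsplit]; exact subset_union_right))
  rw [h1, add_assoc]

/-- Auxiliary: norm bound for integrals of bounded functions. -/
lemma my_norm_integral_le {E : Type*} [NormedAddCommGroup E] [NormedSpace ℝ E]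
    {G : ℝ → E} {a b M : ℝ} (hab : a ≤ b)
    (hint : IntegrableOn G (Ioc a b)) (hbd : ∀ s ∈ Ioc a b, ‖G s‖ ≤ M) :
    ‖∫ s in Ioc a b, G s‖ ≤ M * (b - a) := by
  have := norm_setIntegral_le_of_norm_le_const (μ := volume) (by exact measure_Ioc_lt_top) hbd
  rwa [Real.volume_real_Ioc_of_le hab] at this


set_option maxHeartbeats 3200000 in
/-- State-constraint property of the modified control `β̃` (point iii) of
Assumption 2, Section 7): if the constant control `b₀` is uniformly strictly
inward-pointing in the band `{ξ·y ≤ r}`, there are `k_Y > 0` and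
`t*_Y > 0`, depending only on the data, such that for all starting points
`y₁, y₂ ∈ Ω̄_Y` and every control `β`, the trajectory from `y₂` driven by
the modified control `β̃` stays in `Ω̄_Y` on `[0, min{τ_Y(y₁,β), t*_Y}]`;
in particular `τ_Y(y₂,β̃) ≥ min{τ_Y(y₁,β), t*_Y}`. -/
theorem modControl_state_constraint
    {m m' : ℕ} (B : Set (Euc m')) (g : Euc m → Euc m' → Euc m)
    (L M ζ r : ℝ) (ξ : Euc m) (ΩY : Set (Euc m)) (b₀ : Euc m')
    (hξ : ‖ξ‖ = 1) (hΩY : ΩY = {y : Euc m | 0 < (inner ℝ ξ y : ℝ)})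
    (hB : IsCompact B) (hBne : B.Nonempty) (hb₀ : b₀ ∈ B)
    (hL : 0 ≤ L) (hM : 0 < M) (hζ : 0 < ζ) (hr : 0 < r)
    (hgc : Continuous fun p : Euc m × Euc m' => g p.1 p.2)
    (hgb : ∀ y b, ‖g y b‖ ≤ M)
    (hgL : ∀ y₁ y₂ b, b ∈ B → ‖g y₁ b - g y₂ b‖ ≤ L * ‖y₁ - y₂‖)
    (hin : ∀ y ∈ closure ΩY, (inner ℝ ξ y : ℝ) ≤ r → ζ ≤ (inner ℝ ξ (g y b₀) : ℝ))
    (Ytraj : Euc m → (ℝ → Euc m') → ℝ → Euc m)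
    (hYtraj : ∀ y β, IsControl B β → IsTrajectory g y β (Ytraj y β)) :
    ∃ kY > (0:ℝ), ∃ tstar > (0:ℝ),
      ∀ y₁ ∈ closure ΩY, ∀ y₂ ∈ closure ΩY, ∀ β, IsControl B β →
        (∀ t : ℝ, 0 ≤ t →
          ENNReal.ofReal t ≤
            min (exitTime ΩY (Ytraj y₁ β)) (ENNReal.ofReal tstar) →
          Ytraj y₂ (modControl B ΩY ξ Ytraj (fun _ => b₀) y₁ y₂ kY tstar β) t ∈
            closure ΩY) ∧
        min (exitTime ΩY (Ytraj y₁ β)) (ENNReal.ofReal tstar) ≤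
          exitTime ΩY
            (Ytraj y₂ (modControl B ΩY ξ Ytraj (fun _ => b₀) y₁ y₂ kY tstar β)) := by
  classical
  set L' : ℝ := L + 1 with hL'def
  have hL' : (0:ℝ) < L' := by rw [hL'def]; linarith
  have hgL' : ∀ ya yb b, b ∈ B → ‖g ya b - g yb b‖ ≤ L' * ‖ya - yb‖ := fun ya yb b hb =>
    (hgL ya yb b hb).trans
      (mul_le_mul_of_nonneg_right (by rw [hL'def]; linarith) (norm_nonneg _))
  set tstar : ℝ := min (r / M) (min 1 (ζ / (2 * (L' * Real.exp L') * M))) with htsdef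
  have hexpos : (0:ℝ) < Real.exp L' := Real.exp_pos _
  have hts_pos : 0 < tstar := by
    rw [htsdef]
    refine lt_min (div_pos hr hM) (lt_min one_pos ?_)
    positivity
  have hts_le_rM : tstar ≤ r / M := min_le_left _ _
  have hts_le_one : tstar ≤ 1 := le_trans (min_le_right _ _) (min_le_left _ _)
  have hts_le : tstar ≤ ζ / (2 * (L' * Real.exp L') * M) :=
    le_trans (min_le_right _ _) (min_le_right _ _)
  have hMts : M * tstar ≤ r := by
    have := (le_div_iff₀ hM).1 hts_le_rM
    linarith
  have hkey : M * L' * tstar * Real.exp (L' * tstar) ≤ ζ / 2 := by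
    have e1 : Real.exp (L' * tstar) ≤ Real.exp L' := by
      apply Real.exp_le_exp.2
      nlinarith
    have e2 : tstar * (2 * (L' * Real.exp L') * M) ≤ ζ := by
      have h := (le_div_iff₀ (by positivity : (0:ℝ) < 2 * (L' * Real.exp L') * M)).1 hts_le
      linarith
    nlinarith [mul_le_mul_of_nonneg_left e1 (by positivity : (0:ℝ) ≤ M * L' * tstar)]
  refine ⟨2 / ζ, by positivity, tstar, hts_pos, ?_⟩
  intro y₁ hy₁ y₂ hy₂ β hβ
  have hclY : closure ΩY = {y : Euc m | 0 ≤ (inner ℝ ξ y : ℝ)} := by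
    rw [hΩY]; exact my_closure_halfspace ξ hξ
  have hfrY : frontier ΩY = {y : Euc m | (inner ℝ ξ y : ℝ) = 0} := by
    rw [hΩY]; exact my_frontier_halfspace ξ hξ
  have hy₂' : (0:ℝ) ≤ inner ℝ ξ y₂ := by rw [hclY] at hy₂; exact hy₂
  -- trajectory infrastructure
  have hcontOn : ∀ (y : Euc m) (u : ℝ → Euc m'), IsControl B u →
      ContinuousOn (Ytraj y u) (Ici 0) := fun y u hu => (hYtraj y u hu).1
  have hint : ∀ (y : Euc m) (u : ℝ → Euc m'), IsControl B u → ∀ (a b : ℝ), 0 ≤ a →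
      IntegrableOn (fun s => g (Ytraj y u s) (u s)) (Ioc a b) := by
    intro y u hu a b ha
    exact my_integrableOn_g hgc hgb
      ((hYtraj y u hu).1.mono (fun s hs => le_trans ha hs.1.le)) hu.1
  have hsub : ∀ (y : Euc m) (u : ℝ → Euc m'), IsControl B u → ∀ (a b : ℝ), 0 ≤ a → a ≤ b →
      Ytraj y u b = Ytraj y u a + ∫ s in Ioc a b, g (Ytraj y u s) (u s) := by
    intro y u hu a b ha hab
    refine my_traj_sub (z0 := y) (fun t htt => ?_) (hint y u hu 0 b le_rfl) ha hab
    exact (hYtraj y u hu).2.2 t htt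
  have hlip : ∀ (y : Euc m) (u : ℝ → Euc m'), IsControl B u → ∀ (a b : ℝ), 0 ≤ a → a ≤ b →
      ‖Ytraj y u b - Ytraj y u a‖ ≤ M * (b - a) := by
    intro y u hu a b ha hab
    have h := hsub y u hu a b ha hab
    have h2 : Ytraj y u b - Ytraj y u a = ∫ s in Ioc a b, g (Ytraj y u s) (u s) := by
      rw [h]; abel
    rw [h2]
    exact my_norm_integral_le hab (hint y u hu a b ha) (fun s _ => hgb _ _)
  -- the error term ε
  set ε := epsY B ΩY ξ Ytraj y₁ y₂ tstar with hεdef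
  set C : ℝ := ‖y₂‖ + M * tstar with hCdef
  have hnormY2 : ∀ (u : ℝ → Euc m'), IsControl B u → ∀ (t : ℝ), 0 ≤ t → t ≤ tstar →
      ‖Ytraj y₂ u t‖ ≤ C := by
    intro u hu t htt hts
    have h0 : Ytraj y₂ u 0 = y₂ := (hYtraj y₂ u hu).2.1
    have h1 := hlip y₂ u hu 0 t le_rfl htt
    rw [h0] at h1
    have h2 := norm_sub_norm_le (Ytraj y₂ u t) y₂
    have h3 : M * (t - 0) ≤ M * tstar := by nlinarith
    rw [hCdef]; linarith
  haveI hβne : Nonempty {b : ℝ → Euc m' // IsControl B b} :=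
    ⟨⟨fun _ => b₀, measurable_const, fun _ => hb₀⟩⟩
  haveI htne : ∀ (β' : {b : ℝ → Euc m' // IsControl B b}),
      Nonempty {t : ℝ // 0 ≤ t ∧ ENNReal.ofReal t ≤
        min (exitTime ΩY (Ytraj y₁ β'.1)) (ENNReal.ofReal tstar)} :=
    fun β' => ⟨⟨0, le_rfl, by simp⟩⟩
  have hval : ∀ (β' : {b : ℝ → Euc m' // IsControl B b})
      (t' : {t : ℝ // 0 ≤ t ∧ ENNReal.ofReal t ≤
        min (exitTime ΩY (Ytraj y₁ β'.1)) (ENNReal.ofReal tstar)}),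
      max (-(inner ℝ ξ (Ytraj y₂ β'.1 t'.1) : ℝ)) 0 ≤ C := by
    intro β' t'
    have ht1 : t'.1 ≤ tstar :=
      (ENNReal.ofReal_le_ofReal_iff hts_pos.le).1 (t'.2.2.trans (min_le_right _ _))
    have h2 := hnormY2 β'.1 β'.2 t'.1 t'.2.1 ht1
    have h3 : |(inner ℝ ξ (Ytraj y₂ β'.1 t'.1) : ℝ)| ≤ ‖Ytraj y₂ β'.1 t'.1‖ := by
      have := abs_real_inner_le_norm ξ (Ytraj y₂ β'.1 t'.1)
      rwa [hξ, one_mul] at this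
    have hC0 : 0 ≤ C := by
      rw [hCdef]; have := norm_nonneg y₂; nlinarith [hts_pos.le, hM.le]
    refine max_le ?_ hC0
    have := neg_abs_le (inner ℝ ξ (Ytraj y₂ β'.1 t'.1) : ℝ)
    linarith
  have hub : ε ≤ C := by
    rw [hεdef, epsY]
    exact ciSup_le fun β' => ciSup_le fun t' => hval β' t'
  have hεge : ∀ t : ℝ, 0 ≤ t →
      ENNReal.ofReal t ≤ min (exitTime ΩY (Ytraj y₁ β)) (ENNReal.ofReal tstar) →
      -(inner ℝ ξ (Ytraj y₂ β t) : ℝ) ≤ ε := by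
    intro t htt hle
    have hmem : max (-(inner ℝ ξ (Ytraj y₂ β t) : ℝ)) 0 ≤ ε := by
      rw [hεdef, epsY]
      refine le_ciSup_of_le ⟨C, by rintro x ⟨β', rfl⟩; exact ciSup_le fun t' => hval β' t'⟩
        ⟨β, hβ⟩ ?_
      exact le_ciSup_of_le ⟨C, by rintro x ⟨t', rfl⟩; exact hval ⟨β, hβ⟩ t'⟩
        ⟨t, htt, hle⟩ le_rfl
    exact (le_max_left _ _).trans hmem
  have hε0 : 0 ≤ ε := by
    rw [hεdef, epsY]
    refine le_ciSup_of_le ⟨C, by rintro x ⟨β', rfl⟩; exact ciSup_le fun t' => hval β' t'⟩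
      ⟨β, hβ⟩ ?_
    exact le_ciSup_of_le ⟨C, by rintro x ⟨t', rfl⟩; exact hval ⟨β, hβ⟩ t'⟩
      ⟨0, le_rfl, by simp⟩ (le_max_right _ _)
  set Y₂ := Ytraj y₂ β with hY₂def
  set t0 := hitBdryTime ΩY Y₂ tstar with ht0def
  have ht0_nonneg : 0 ≤ t0 := ENNReal.toReal_nonneg
  have ht0_le_ts : t0 ≤ tstar := by
    rw [ht0def, hitBdryTime]
    refine le_trans (ENNReal.toReal_mono ENNReal.ofReal_ne_top (min_le_right _ _)) ?_
    rw [ENNReal.toReal_ofReal hts_pos.le]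
  set σ := (2 / ζ) * ε with hσdef
  have hσ0 : 0 ≤ σ := by
    rw [hσdef]; exact mul_nonneg (by positivity) hε0
  set βm := modControl B ΩY ξ Ytraj (fun _ => b₀) y₁ y₂ (2 / ζ) tstar β with hβmdef
  have hβmeq : ∀ t, βm t = if t ≤ t0 then β t else if t ≤ t0 + σ then b₀ else β (t - σ) :=
    fun t => rfl
  have hβmctrl : IsControl B βm := by
    constructor
    · have heq : βm = fun t => if t ≤ t0 then β t
          else if t ≤ t0 + σ then b₀ else β (t - σ) := funext hβmeq
      rw [heq]
      refine Measurable.ite measurableSet_Iic hβ.1 ?_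
      exact Measurable.ite measurableSet_Iic measurable_const
        (hβ.1.comp (measurable_id.sub measurable_const))
    · intro t
      rw [hβmeq t]
      split_ifs
      · exact hβ.2 t
      · exact hb₀
      · exact hβ.2 _
  set Z := Ytraj y₂ βm with hZdef
  have hY20 : Y₂ 0 = y₂ := (hYtraj y₂ β hβ).2.1
  have hZcont : ContinuousOn Z (Ici 0) := (hYtraj y₂ βm hβmctrl).1
  have hY₂cont : ContinuousOn Y₂ (Ici 0) := (hYtraj y₂ β hβ).1
  -- agreement on [0, t0]
  have hagree : ∀ t ∈ Icc (0:ℝ) t0, Z t = Y₂ t := by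
    intro t htI
    have hcontD : ContinuousOn (fun s => ‖Z s - Y₂ s‖) (Icc 0 t0) :=
      ((hZcont.mono (fun s hs => hs.1)).sub (hY₂cont.mono (fun s hs => hs.1))).norm
    have hineq : ∀ u ∈ Icc (0:ℝ) t0, ‖Z u - Y₂ u‖ ≤ 0 + L' * ∫ s in (0:ℝ)..u, ‖Z s - Y₂ s‖ := by
      intro u hu
      have hdiff : Z u - Y₂ u = ∫ s in Ioc (0:ℝ) u, (g (Z s) (βm s) - g (Y₂ s) (β s)) := by
        have hZu := (hYtraj y₂ βm hβmctrl).2.2 u hu.1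
        have hYu := (hYtraj y₂ β hβ).2.2 u hu.1
        rw [hZdef, hY₂def, hZu, hYu,
          integral_sub (hint y₂ βm hβmctrl 0 u le_rfl) (hint y₂ β hβ 0 u le_rfl)]
        abel
      have hb1 : ‖Z u - Y₂ u‖ ≤ ∫ s in Ioc (0:ℝ) u, L' * ‖Z s - Y₂ s‖ := by
        rw [hdiff]
        refine le_trans (norm_integral_le_integral_norm _) ?_
        refine setIntegral_mono_on
          ((Integrable.sub (hint y₂ βm hβmctrl 0 u le_rfl) (hint y₂ β hβ 0 u le_rfl)).norm)
          (((hcontD.mono (Icc_subset_Icc le_rfl hu.2)).integrableOn_Icc.mono_set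
            Ioc_subset_Icc_self).const_mul L')
          measurableSet_Ioc ?_
        intro s hs
        have hsle : s ≤ t0 := hs.2.trans hu.2
        have hβms : βm s = β s := by rw [hβmeq s, if_pos hsle]
        rw [hβms]
        exact hgL' (Z s) (Y₂ s) (β s) (hβ.2 s)
      calc ‖Z u - Y₂ u‖ ≤ ∫ s in Ioc (0:ℝ) u, L' * ‖Z s - Y₂ s‖ := hb1
        _ = L' * ∫ s in Ioc (0:ℝ) u, ‖Z s - Y₂ s‖ := MeasureTheory.integral_const_mul L' _
        _ = 0 + L' * ∫ s in (0:ℝ)..u, ‖Z s - Y₂ s‖ := by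
            rw [intervalIntegral.integral_of_le hu.1]; ring
    have := my_gronwall ht0_nonneg le_rfl hL' hcontD hineq t htI
    have h0 : ‖Z t - Y₂ t‖ ≤ 0 := by simpa using this
    have := norm_le_zero_iff.1 h0
    exact sub_eq_zero.1 this
  -- nonnegativity along Y₂ before t0
  have hbefore : ∀ t ∈ Icc (0:ℝ) t0, 0 ≤ (inner ℝ ξ (Y₂ t) : ℝ) := by
    intro t htI
    by_contra hneg
    push_neg at hneg
    have hcont2 : ContinuousOn (fun s => (inner ℝ ξ (Y₂ s) : ℝ)) (Icc 0 t) :=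
      continuousOn_const.inner (hY₂cont.mono (fun s hs => hs.1))
    have h0mem : (0:ℝ) ∈ Icc (inner ℝ ξ (Y₂ t) : ℝ) (inner ℝ ξ (Y₂ 0) : ℝ) :=
      ⟨hneg.le, by rw [hY20]; exact hy₂'⟩
    obtain ⟨s, hs, hs0⟩ := intermediate_value_Icc' htI.1 hcont2 h0mem
    have hhit : hittingTime (frontier ΩY) Y₂ ≤ ENNReal.ofReal s := by
      rw [hittingTime]
      exact sInf_le ⟨s, ⟨hs.1, by rw [hfrY]; exact hs0⟩, rfl⟩
    have ht0les : t0 ≤ s := by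
      rw [ht0def, hitBdryTime]
      refine le_trans
        (ENNReal.toReal_mono ENNReal.ofReal_ne_top ((min_le_left _ _).trans hhit)) ?_
      rw [ENNReal.toReal_ofReal hs.1]
    have hst : s = t := le_antisymm hs.2 (le_trans (le_trans htI.2 ht0les) le_rfl)
    rw [hst] at hs0
    exact absurd hs0 (ne_of_lt hneg)
  -- MAIN claim
  have main : ∀ t : ℝ, 0 ≤ t →
      ENNReal.ofReal t ≤ min (exitTime ΩY (Ytraj y₁ β)) (ENNReal.ofReal tstar) →
      0 ≤ (inner ℝ ξ (Z t) : ℝ) := by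
    intro t ht hle
    have httstar : t ≤ tstar :=
      (ENNReal.ofReal_le_ofReal_iff hts_pos.le).1 (hle.trans (min_le_right _ _))
    rcases eq_or_lt_of_le hε0 with hε0' | hεpos
    · -- ε = 0 : the modified control equals β
      have hσ0' : σ = 0 := by rw [hσdef, ← hε0', mul_zero]
      have hβmβ : βm = β := by
        funext s
        rw [hβmeq s]
        split_ifs with hc1 hc2
        · rfl
        · exact absurd (by rw [hσ0'] at hc2; linarith) hc1
        · rw [hσ0', sub_zero]
      have h1 := hεge t ht hle
      rw [← hε0'] at h1
      rw [hZdef, hβmβ]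
      linarith
    · -- ε > 0
      have hσpos : 0 < σ := by
        rw [hσdef]; exact mul_pos (by positivity) hεpos
      rcases le_or_gt t t0 with h1 | h1
      · rw [hagree t ⟨ht, h1⟩]
        exact hbefore t ⟨ht, h1⟩
      · -- after the hitting time
        have ht0lt : t0 < tstar := lt_of_lt_of_le h1 httstar
        -- Y₂ t0 is on the boundary
        have hseteq : {s : ℝ | 0 ≤ s ∧ Y₂ s ∈ frontier ΩY}
            = {s : ℝ | 0 ≤ s ∧ (inner ℝ ξ (Y₂ s) : ℝ) = 0} := by
          ext s
          rw [hfrY]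
          exact Iff.rfl
        have hhit0 : (inner ℝ ξ (Y₂ t0) : ℝ) = 0 := by
          have hHitlt : hittingTime (frontier ΩY) Y₂ < ENNReal.ofReal tstar := by
            by_contra hge
            push_neg at hge
            have : t0 = tstar := by
              rw [ht0def, hitBdryTime, min_eq_right hge, ENNReal.toReal_ofReal hts_pos.le]
            exact absurd this (ne_of_lt ht0lt)
          have hHit' : hittingTime (frontier ΩY) Y₂
              = sInf (ENNReal.ofReal '' {s : ℝ | 0 ≤ s ∧ (inner ℝ ξ (Y₂ s) : ℝ) = 0}) := by
            rw [hittingTime, hseteq]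
          have hSne : {s : ℝ | 0 ≤ s ∧ (inner ℝ ξ (Y₂ s) : ℝ) = 0}.Nonempty := by
            by_contra hemp
            rw [Set.not_nonempty_iff_eq_empty] at hemp
            have : hittingTime (frontier ΩY) Y₂ = ⊤ := by
              rw [hHit', hemp, Set.image_empty, sInf_empty]
            rw [this] at hHitlt
            exact absurd hHitlt (by simp)
          have hSclosed : IsClosed {s : ℝ | 0 ≤ s ∧ (inner ℝ ξ (Y₂ s) : ℝ) = 0} := by
            have heq : {s : ℝ | 0 ≤ s ∧ (inner ℝ ξ (Y₂ s) : ℝ) = 0}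
                = Ici 0 ∩ (fun s => (inner ℝ ξ (Y₂ s) : ℝ)) ⁻¹' {0} := rfl
            rw [heq]
            exact ContinuousOn.preimage_isClosed_of_isClosed
              (continuousOn_const.inner hY₂cont) isClosed_Ici isClosed_singleton
          have hbdd : BddBelow {s : ℝ | 0 ≤ s ∧ (inner ℝ ξ (Y₂ s) : ℝ) = 0} :=
            ⟨0, fun x hx => hx.1⟩
          have hs0 := hSclosed.csInf_mem hSne hbdd
          have hHiteq : hittingTime (frontier ΩY) Y₂
              = ENNReal.ofReal (sInf {s : ℝ | 0 ≤ s ∧ (inner ℝ ξ (Y₂ s) : ℝ) = 0}) := by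
            rw [hHit']
            apply le_antisymm
            · exact sInf_le ⟨_, hs0, rfl⟩
            · apply le_sInf
              rintro x ⟨s, hsS, rfl⟩
              exact ENNReal.ofReal_le_ofReal (csInf_le hbdd hsS)
          have ht0s0 : t0 = sInf {s : ℝ | 0 ≤ s ∧ (inner ℝ ξ (Y₂ s) : ℝ) = 0} := by
            rw [ht0def, hitBdryTime, min_eq_left hHitlt.le, hHiteq,
              ENNReal.toReal_ofReal hs0.1]
          rw [ht0s0]
          exact hs0.2
        have hZt0 : Z t0 = Y₂ t0 := hagree t0 ⟨ht0_nonneg, le_rfl⟩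
        have hZ00 : (inner ℝ ξ (Z t0) : ℝ) = 0 := by rw [hZt0]; exact hhit0
        -- phase 2: nonnegativity while the inward control acts
        have hphase2 : ∀ u, t0 < u → u ≤ t0 + σ → 0 ≤ (inner ℝ ξ (Z u) : ℝ) := by
          intro u hu1 hu2
          by_contra hneg
          push_neg at hneg
          have hKcl : IsClosed {v | v ∈ Icc t0 u ∧ 0 ≤ (inner ℝ ξ (Z v) : ℝ)} := by
            have heq : {v | v ∈ Icc t0 u ∧ 0 ≤ (inner ℝ ξ (Z v) : ℝ)}
                = Icc t0 u ∩ (fun v => (inner ℝ ξ (Z v) : ℝ)) ⁻¹' Ici 0 := rfl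
            rw [heq]
            exact ContinuousOn.preimage_isClosed_of_isClosed
              (continuousOn_const.inner (hZcont.mono (fun v hv => le_trans ht0_nonneg hv.1)))
              isClosed_Icc isClosed_Ici
          have hKne : {v | v ∈ Icc t0 u ∧ 0 ≤ (inner ℝ ξ (Z v) : ℝ)}.Nonempty :=
            ⟨t0, ⟨le_rfl, hu1.le⟩, le_of_eq hZ00.symm⟩
          have hKbdd : BddAbove {v | v ∈ Icc t0 u ∧ 0 ≤ (inner ℝ ξ (Z v) : ℝ)} :=
            ⟨u, fun v hv => hv.1.2⟩
          set w := sSup {v | v ∈ Icc t0 u ∧ 0 ≤ (inner ℝ ξ (Z v) : ℝ)} with hwdef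
          have hwK : w ∈ {v | v ∈ Icc t0 u ∧ 0 ≤ (inner ℝ ξ (Z v) : ℝ)} :=
            hKcl.csSup_mem hKne hKbdd
          have hwu : w < u := by
            rcases lt_or_eq_of_le hwK.1.2 with h | h
            · exact h
            · rw [h] at hwK; exact absurd hwK.2 (not_le.2 hneg)
          have hwnn : 0 ≤ w := le_trans ht0_nonneg hwK.1.1
          have hwneg : ∀ v, w < v → v ≤ u → (inner ℝ ξ (Z v) : ℝ) < 0 := by
            intro v hv1 hv2
            by_contra hge
            push_neg at hge
            have hvK : v ∈ {v | v ∈ Icc t0 u ∧ 0 ≤ (inner ℝ ξ (Z v) : ℝ)} :=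
              ⟨⟨le_trans hwK.1.1 hv1.le, hv2⟩, hge⟩
            exact absurd (le_csSup hKbdd hvK) (not_le.2 hv1)
          have hw0 : (inner ℝ ξ (Z w) : ℝ) = 0 := by
            refine le_antisymm ?_ hwK.2
            by_contra hpos
            push_neg at hpos
            have hcw : ContinuousWithinAt (fun v => (inner ℝ ξ (Z v) : ℝ)) (Ioi w) w :=
              ((continuousOn_const.inner hZcont) w hwnn).mono
                (fun v hv => le_trans hwnn (le_of_lt hv))
            have hev1 : ∀ᶠ v in nhdsWithin w (Ioi w), 0 < (inner ℝ ξ (Z v) : ℝ) :=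
              hcw.eventually_const_lt hpos
            have hev2 : ∀ᶠ v in nhdsWithin w (Ioi w), v < u :=
              ((isOpen_Iio.eventually_mem hwu).filter_mono nhdsWithin_le_nhds)
            have hev3 : ∀ᶠ v in nhdsWithin w (Ioi w), v ∈ Ioi w :=
              eventually_mem_nhdsWithin
            obtain ⟨v, ⟨hv1, hv2⟩, hv3⟩ := ((hev1.and hev2).and hev3).exists
            exact absurd hv1 (not_lt.2 (hwneg v hv3 hv2.le).le)
          -- local positivity of the drift near w
          have hZw_mem : Z w ∈ closure ΩY := by
            rw [hclY]; exact le_of_eq hw0.symm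
          have hdrift : ζ ≤ (inner ℝ ξ (g (Z w) b₀) : ℝ) :=
            hin _ hZw_mem (by rw [hw0]; exact hr.le)
          have hGc : ContinuousWithinAt (fun v => (inner ℝ ξ (g (Z v) b₀) : ℝ)) (Ioi w) w := by
            have hZcw : ContinuousWithinAt Z (Ioi w) w :=
              (hZcont w hwnn).mono (fun v hv => le_trans hwnn (le_of_lt hv))
            have : ContinuousWithinAt (fun v => g (Z v) b₀) (Ioi w) w :=
              (hgc.continuousAt.comp_continuousWithinAt (hZcw.prodMk continuousWithinAt_const) :
                ContinuousWithinAt ((fun p : Euc m × Euc m' => g p.1 p.2) ∘ fun v => (Z v, b₀)) (Ioi w) w)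
            exact continuousWithinAt_const.inner this
          have hev : ∀ᶠ v in nhdsWithin w (Ioi w), ζ / 2 < (inner ℝ ξ (g (Z v) b₀) : ℝ) :=
            hGc.eventually_const_lt (by linarith)
          have hev2 : ∀ᶠ v in nhdsWithin w (Ioi w), v < u :=
            ((isOpen_Iio.eventually_mem hwu).filter_mono nhdsWithin_le_nhds)
          obtain ⟨u', hu'w, hu'sub⟩ :=
            mem_nhdsGT_iff_exists_Ioc_subset.1 (hev.and hev2)
          set p := min u' ((w + u) / 2) with hpdef
          have hwp : w < p := lt_min hu'w (by linarith)
          have hpu : p < u := lt_of_le_of_lt (min_le_right _ _) (by linarith)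
          have hsubIoc : ∀ v ∈ Ioc w p, ζ / 2 < (inner ℝ ξ (g (Z v) b₀) : ℝ) := by
            intro v hv
            exact (hu'sub ⟨hv.1, le_trans hv.2 (min_le_left _ _)⟩).1
          have hid : Z p = Z w + ∫ s in Ioc w p, g (Z s) (βm s) :=
            hsub y₂ βm hβmctrl w p hwnn hwp.le
          have hcongr : ∫ s in Ioc w p, g (Z s) (βm s) = ∫ s in Ioc w p, g (Z s) b₀ := by
            refine setIntegral_congr_fun measurableSet_Ioc (fun s hs => ?_)
            rw [hβmeq s, if_neg (not_le.2 (lt_of_le_of_lt hwK.1.1 hs.1)),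
              if_pos (le_trans hs.2 (le_trans hpu.le hu2))]
          have hintb : IntegrableOn (fun s => g (Z s) b₀) (Ioc w p) :=
            my_integrableOn_g hgc hgb
              (hZcont.mono (fun s hs => le_trans hwnn hs.1.le)) measurable_const
          have hinner : (inner ℝ ξ (Z p) : ℝ)
              = (inner ℝ ξ (Z w) : ℝ) + ∫ s in Ioc w p, (inner ℝ ξ (g (Z s) b₀) : ℝ) := by
            rw [hid, hcongr, inner_add_right]
            congr 1
            exact (integral_inner hintb ξ).symm
          have hlow : ζ / 2 * (p - w) ≤ ∫ s in Ioc w p, (inner ℝ ξ (g (Z s) b₀) : ℝ) := by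
            have hconst : ∫ _s in Ioc w p, (ζ / 2 : ℝ) = ζ / 2 * (p - w) := by
              rw [setIntegral_const, Real.volume_real_Ioc_of_le (by linarith : w ≤ p),
                smul_eq_mul, mul_comm]
            rw [← hconst]
            refine setIntegral_mono_on
              (integrableOn_const measure_Ioc_lt_top.ne)
              (hintb.const_inner ξ) measurableSet_Ioc ?_
            intro s hs
            exact (hsubIoc s hs).le
          have hppos : 0 < (inner ℝ ξ (Z p) : ℝ) := by
            rw [hinner, hw0]
            nlinarith
          exact absurd hppos (not_lt.2 (hwneg p hwp hpu.le).le)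
        rcases le_or_gt t (t0 + σ) with h2 | h2
        · exact hphase2 t h1 h2
        · -- phase 3
          have hc0 : 0 ≤ t0 + σ := by linarith
          have hct : t0 + σ < t := h2
          have hcts : t0 + σ < tstar := lt_of_lt_of_le hct httstar
          -- the band bound on [t0, t0+σ]
          have hband : ∀ s ∈ Icc t0 (t0 + σ), (inner ℝ ξ (Z s) : ℝ) ≤ r := by
            intro s hs
            have h3 := hlip y₂ βm hβmctrl t0 s ht0_nonneg hs.1
            have h4 : (inner ℝ ξ (Z s - Z t0) : ℝ) ≤ M * (s - t0) := by
              have h4a := real_inner_le_norm ξ (Z s - Z t0)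
              rw [hξ, one_mul] at h4a
              exact h4a.trans h3
            rw [inner_sub_right] at h4
            have h5 : s - t0 ≤ tstar := by
              have : s ≤ t0 + σ := hs.2
              linarith [hcts, ht0_nonneg]
            have h6 : M * (s - t0) ≤ M * tstar := mul_le_mul_of_nonneg_left h5 hM.le
            rw [hZ00] at h4
            linarith
          -- phase-2 gain
          have hZcge : ζ * σ ≤ (inner ℝ ξ (Z (t0 + σ)) : ℝ) := by
            have hid : Z (t0 + σ) = Z t0 + ∫ s in Ioc t0 (t0 + σ), g (Z s) (βm s) :=
              hsub y₂ βm hβmctrl t0 (t0 + σ) ht0_nonneg (by linarith)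
            have hcongr : ∫ s in Ioc t0 (t0 + σ), g (Z s) (βm s)
                = ∫ s in Ioc t0 (t0 + σ), g (Z s) b₀ := by
              refine setIntegral_congr_fun measurableSet_Ioc (fun s hs => ?_)
              rw [hβmeq s, if_neg (not_le.2 hs.1), if_pos hs.2]
            have hintb : IntegrableOn (fun s => g (Z s) b₀) (Ioc t0 (t0 + σ)) :=
              my_integrableOn_g hgc hgb
                (hZcont.mono (fun s hs => le_trans ht0_nonneg hs.1.le)) measurable_const
            have hinner : (inner ℝ ξ (Z (t0 + σ)) : ℝ)
                = 0 + ∫ s in Ioc t0 (t0 + σ), (inner ℝ ξ (g (Z s) b₀) : ℝ) := by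
              rw [hid, inner_add_right, hZ00, hcongr]
              congr 1
              exact (integral_inner hintb ξ).symm
            rw [hinner, zero_add]
            have hconst : ∫ _s in Ioc t0 (t0 + σ), (ζ : ℝ) = ζ * σ := by
              rw [setIntegral_const, Real.volume_real_Ioc_of_le (by linarith : t0 ≤ t0 + σ),
                add_sub_cancel_left, smul_eq_mul, mul_comm]
            have hmono : ∀ s ∈ Ioc t0 (t0 + σ), (ζ : ℝ) ≤ (inner ℝ ξ (g (Z s) b₀) : ℝ) := by
              intro s hs
              refine hin _ ?_ (hband s ⟨hs.1.le, hs.2⟩)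
              rw [hclY]
              exact hphase2 s hs.1 hs.2
            rw [← hconst]
            exact setIntegral_mono_on
              (integrableOn_const measure_Ioc_lt_top.ne)
              (hintb.const_inner ξ) measurableSet_Ioc hmono
          -- the shifted trajectory W
          set W : ℝ → Euc m := fun s => Y₂ (s - σ) with hWdef
          have hWcont : ContinuousOn W (Ici σ) := by
            refine hY₂cont.comp ((continuous_id.sub continuous_const).continuousOn) ?_
            intro s hs
            simp only [Set.mem_Ici, id_eq]
            rw [Set.mem_Ici] at hs
            linarith
          have hWc : W (t0 + σ) = Y₂ t0 := by
            rw [hWdef]; simp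
          have hβshift : Measurable (fun s => β (s - σ)) :=
            hβ.1.comp (measurable_id.sub measurable_const)
          have hWid : ∀ u, t0 + σ ≤ u →
              W u = Y₂ t0 + ∫ s in Ioc (t0 + σ) u, g (W s) (β (s - σ)) := by
            intro u hu
            have h1 : W u = Y₂ t0 + ∫ s in Ioc t0 (u - σ), g (Y₂ s) (β s) := by
              rw [hWdef]
              exact hsub y₂ β hβ t0 (u - σ) ht0_nonneg (by linarith)
            rw [h1]
            congr 1
            have h2 : ∫ s in Ioc (t0 + σ) u, g (W s) (β (s - σ))
                = ∫ s in (t0 + σ)..u, g (Y₂ (s - σ)) (β (s - σ)) := by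
              rw [intervalIntegral.integral_of_le hu]
            have h3 : (∫ s in (t0 + σ)..u, g (Y₂ (s - σ)) (β (s - σ)))
                = ∫ s in (t0 + σ - σ)..(u - σ), g (Y₂ s) (β s) :=
              intervalIntegral.integral_comp_sub_right (fun x => g (Y₂ x) (β x)) σ
            rw [h2, h3, add_sub_cancel_right,
              intervalIntegral.integral_of_le (by linarith : t0 ≤ u - σ)]
          have hZid : ∀ u, t0 + σ ≤ u →
              Z u = Z (t0 + σ) + ∫ s in Ioc (t0 + σ) u, g (Z s) (β (s - σ)) := by
            intro u hu
            have hs2 := hsub y₂ βm hβmctrl (t0 + σ) u hc0 hu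
            rw [← hZdef] at hs2
            rw [hs2]
            congr 1
            refine setIntegral_congr_fun measurableSet_Ioc (fun s hs => ?_)
            rw [hβmeq s, if_neg (by push_neg; linarith [hs.1, hσ0] : ¬ s ≤ t0),
              if_neg (not_le.2 hs.1)]
          have hWint : ∀ u, IntegrableOn (fun s => g (W s) (β (s - σ))) (Ioc (t0 + σ) u) :=
            fun u => my_integrableOn_g hgc hgb
              (hWcont.mono (fun s hs => by
                rw [Set.mem_Ici]; linarith [hs.1, ht0_nonneg])) hβshift
          have hZint3 : ∀ u, IntegrableOn (fun s => g (Z s) (β (s - σ))) (Ioc (t0 + σ) u) :=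
            fun u => my_integrableOn_g hgc hgb
              (hZcont.mono (fun s hs => le_trans hc0 hs.1.le)) hβshift
          have hΔcont : ContinuousOn (fun s => ‖Z s - W s‖) (Icc (t0 + σ) t) := by
            refine ContinuousOn.norm (ContinuousOn.sub ?_ ?_)
            · exact hZcont.mono (fun s hs => le_trans hc0 hs.1)
            · exact hWcont.mono (fun s hs => by
                rw [Set.mem_Ici]; linarith [hs.1, ht0_nonneg])
          have hac : ‖Z (t0 + σ) - W (t0 + σ)‖ ≤ M * σ := by
            rw [hWc, ← hZt0]
            have := hlip y₂ βm hβmctrl t0 (t0 + σ) ht0_nonneg (by linarith)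
            calc ‖Z (t0 + σ) - Z t0‖ ≤ M * (t0 + σ - t0) := this
              _ = M * σ := by ring_nf
          have hgron : ∀ u ∈ Icc (t0 + σ) t,
              ‖Z u - W u‖ ≤ (M * σ) * Real.exp (L' * (u - (t0 + σ))) := by
            refine my_gronwall hct.le (by positivity) hL' hΔcont ?_
            intro u hu
            have hdiff : Z u - W u = (Z (t0 + σ) - W (t0 + σ))
                + ∫ s in Ioc (t0 + σ) u, (g (Z s) (β (s - σ)) - g (W s) (β (s - σ))) := by
              rw [hZid u hu.1, hWid u hu.1, ← hWc,
                integral_sub (hZint3 u) (hWint u)]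
              abel
            have hb1 : ‖Z u - W u‖ ≤ ‖Z (t0 + σ) - W (t0 + σ)‖
                + ∫ s in Ioc (t0 + σ) u, L' * ‖Z s - W s‖ := by
              rw [hdiff]
              refine le_trans (norm_add_le _ _) (add_le_add_right ?_ _)
              refine le_trans (norm_integral_le_integral_norm _) ?_
              refine setIntegral_mono_on ((Integrable.sub (hZint3 u) (hWint u)).norm)
                (((hΔcont.mono (Icc_subset_Icc le_rfl hu.2)).integrableOn_Icc.mono_set
                  Ioc_subset_Icc_self).const_mul L')
                measurableSet_Ioc ?_
              intro s hs
              exact hgL' (Z s) (W s) (β (s - σ)) (hβ.2 _)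
            calc ‖Z u - W u‖ ≤ ‖Z (t0 + σ) - W (t0 + σ)‖
                  + ∫ s in Ioc (t0 + σ) u, L' * ‖Z s - W s‖ := hb1
              _ ≤ (M * σ) + L' * ∫ s in (t0 + σ)..u, ‖Z s - W s‖ := by
                  rw [MeasureTheory.integral_const_mul, intervalIntegral.integral_of_le hu.1]
                  exact add_le_add_left hac _
          -- final estimate
          have hI1 : ‖∫ s in Ioc (t0 + σ) t, (g (Z s) (β (s - σ)) - g (W s) (β (s - σ)))‖
              ≤ (L' * ((M * σ) * Real.exp (L' * tstar))) * (t - (t0 + σ)) := by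
            refine my_norm_integral_le hct.le
              ((hZint3 t).sub (hWint t)) ?_
            intro s hs
            have h3 := hgL' (Z s) (W s) (β (s - σ)) (hβ.2 _)
            have h4 := hgron s ⟨hs.1.le, hs.2⟩
            have h5 : Real.exp (L' * (s - (t0 + σ))) ≤ Real.exp (L' * tstar) := by
              apply Real.exp_le_exp.2
              have : s - (t0 + σ) ≤ tstar := by
                have := hs.2
                linarith [hc0, httstar]
              nlinarith [hL'.le]
            have h6 : ‖Z s - W s‖ ≤ (M * σ) * Real.exp (L' * tstar) := by
              refine le_trans h4 ?_
              have : (0:ℝ) ≤ M * σ := by positivity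
              nlinarith
            calc ‖g (Z s) (β (s - σ)) - g (W s) (β (s - σ))‖ ≤ L' * ‖Z s - W s‖ := h3
              _ ≤ L' * ((M * σ) * Real.exp (L' * tstar)) :=
                  mul_le_mul_of_nonneg_left h6 hL'.le
          have hdifft : Z t - W t = (Z (t0 + σ) - W (t0 + σ))
              + ∫ s in Ioc (t0 + σ) t, (g (Z s) (β (s - σ)) - g (W s) (β (s - σ))) := by
            rw [hZid t hct.le, hWid t hct.le, ← hWc, integral_sub (hZint3 t) (hWint t)]
            abel
          have hWtlow : -ε ≤ (inner ℝ ξ (W t) : ℝ) := by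
            rw [hWdef]
            have h1 : (0:ℝ) ≤ t - σ := by linarith [ht0_nonneg]
            have h2 : ENNReal.ofReal (t - σ)
                ≤ min (exitTime ΩY (Ytraj y₁ β)) (ENNReal.ofReal tstar) :=
              le_trans (ENNReal.ofReal_le_ofReal (by linarith)) hle
            have := hεge (t - σ) h1 h2
            rw [hY₂def]
            linarith
          have hIinner : |(inner ℝ ξ (∫ s in Ioc (t0 + σ) t,
              (g (Z s) (β (s - σ)) - g (W s) (β (s - σ)))) : ℝ)|
              ≤ (L' * ((M * σ) * Real.exp (L' * tstar))) * (t - (t0 + σ)) := by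
            refine le_trans ?_ hI1
            have := abs_real_inner_le_norm ξ (∫ s in Ioc (t0 + σ) t,
              (g (Z s) (β (s - σ)) - g (W s) (β (s - σ))))
            rwa [hξ, one_mul] at this
          have hsplit : (inner ℝ ξ (Z t) : ℝ) = (inner ℝ ξ (W t) : ℝ)
              + ((inner ℝ ξ (Z (t0 + σ)) : ℝ) - (inner ℝ ξ (W (t0 + σ)) : ℝ))
              + (inner ℝ ξ (∫ s in Ioc (t0 + σ) t,
                  (g (Z s) (β (s - σ)) - g (W s) (β (s - σ)))) : ℝ) := by
            have h1 : Z t = W t + (Z (t0 + σ) - W (t0 + σ))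
                + ∫ s in Ioc (t0 + σ) t, (g (Z s) (β (s - σ)) - g (W s) (β (s - σ))) := by
              have := hdifft
              have h2 : Z t = W t + (Z t - W t) := by abel
              rw [h2, this]; abel
            rw [h1, inner_add_right, inner_add_right, inner_sub_right]
          have hWc0 : (inner ℝ ξ (W (t0 + σ)) : ℝ) = 0 := by rw [hWc]; exact hhit0
          -- numeric conclusion
          have hbig : (L' * ((M * σ) * Real.exp (L' * tstar))) * (t - (t0 + σ)) ≤ ε := by
            have h1 : t - (t0 + σ) ≤ tstar := by linarith [hc0, httstar]
            have h2 : (0:ℝ) ≤ L' * ((M * σ) * Real.exp (L' * tstar)) := by positivity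
            have h3 : (L' * ((M * σ) * Real.exp (L' * tstar))) * (t - (t0 + σ))
                ≤ (L' * ((M * σ) * Real.exp (L' * tstar))) * tstar :=
              mul_le_mul_of_nonneg_left h1 h2
            have h4 : (L' * ((M * σ) * Real.exp (L' * tstar))) * tstar
                = σ * (M * L' * tstar * Real.exp (L' * tstar)) := by ring
            have h5 : σ * (M * L' * tstar * Real.exp (L' * tstar)) ≤ σ * (ζ / 2) :=
              mul_le_mul_of_nonneg_left hkey hσ0
            have h6 : σ * (ζ / 2) = ε := by
              rw [hσdef]; field_simp
            calc (L' * ((M * σ) * Real.exp (L' * tstar))) * (t - (t0 + σ))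
                ≤ (L' * ((M * σ) * Real.exp (L' * tstar))) * tstar := h3
              _ = σ * (M * L' * tstar * Real.exp (L' * tstar)) := h4
              _ ≤ σ * (ζ / 2) := h5
              _ = ε := h6
          have hζσ : ζ * σ = 2 * ε := by
            rw [hσdef]; field_simp
          rw [hsplit, hWc0]
          have habs := abs_le.1 hIinner
          linarith [hZcge, hWtlow, habs.1, hbig]
  refine ⟨fun t ht hle => ?_, ?_⟩
  · rw [hclY]
    exact main t ht hle
  · by_contra hcon
    push_neg at hcon
    rw [exitTime] at hcon
    obtain ⟨x, hx, hxlt⟩ := sInf_lt_iff.1 hcon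
    obtain ⟨t, ⟨htt, htnot⟩, rfl⟩ := hx
    refine htnot ?_
    rw [hclY]
    exact main t htt hxlt.le


end
end

section
/- Estimate (28) on the constraint-violation error ε_X under weak decoupling: in the setting of Section 7 (half-space domains, player X's dynamics f̃(x,a,b)=f(x)+a+Db with f bounded by M and L-Lipschitz, player Y's dynamics g decoupled), for every T ≥ t*_X > 0 and every compact K = K^X×K^Y ⊆ Ω̄_X×Ω̄_Y there is a constant C > 0 (depending only on T, K, t*_X, t*_Y and the data) such that for all x₁,x₂ ∈ K^X and y₁,y₂ ∈ K^Y, the quantity ε_X = sup_{γ∈Γ} sup_{β∈ℬ} sup_{0 ≤ t ≤ min{τ_X(x₂,γ[β̃],β̃), t*_X}} (−ξ·X(t;x₁,γ[β̃],β))⁺ satisfies 0 ≤ ε_X ≤ C(‖x₁−x₂‖ + ‖y₁−y₂‖), where β̃ is the non-anticipating modification of β associated with y₁, y₂ and ξ is the unit inward normal of the half-space Ω_X. -/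
open MeasureTheory Set RealInnerProductSpace
open scoped ENNReal

noncomputable section

section AuxHelpers

open intervalIntegral

private lemma aux_inner_nonneg {k : ℕ} (ξ : Euc k) {z : Euc k}
    (hz : z ∈ closure {x : Euc k | 0 < (inner ℝ ξ x : ℝ)}) : 0 ≤ (inner ℝ ξ z : ℝ) := by
  have hcont : Continuous fun x : Euc k => (inner ℝ ξ x : ℝ) :=
    Continuous.inner continuous_const continuous_id
  have hcl : IsClosed {x : Euc k | 0 ≤ (inner ℝ ξ x : ℝ)} :=
    isClosed_le continuous_const hcont
  exact closure_minimal (fun x (hx : 0 < (inner ℝ ξ x : ℝ)) => hx.le) hcl hz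

private lemma aux_mem_closure {k : ℕ} {Ω : Set (Euc k)} {Z : ℝ → Euc k}
    (hZ : ContinuousOn Z (Ici (0:ℝ))) (h0 : Z 0 ∈ closure Ω) {t : ℝ}
    (ht : 0 ≤ t) (hle : ENNReal.ofReal t ≤ exitTime Ω Z) : Z t ∈ closure Ω := by
  have key : ∀ s, 0 ≤ s → s < t → Z s ∈ closure Ω := by
    intro s hs hst
    by_contra hout
    have h1 : exitTime Ω Z ≤ ENNReal.ofReal s := sInf_le ⟨s, ⟨hs, hout⟩, rfl⟩
    have h2 := (ENNReal.ofReal_le_ofReal_iff hs).mp (hle.trans h1)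
    linarith
  rcases eq_or_lt_of_le ht with h | h
  · rwa [← h]
  · have hmem : t ∈ closure (Ico (0:ℝ) t) := by
      rw [closure_Ico h.ne]
      exact ⟨h.le, le_rfl⟩
    have hne : (nhdsWithin t (Ico (0:ℝ) t)).NeBot :=
      mem_closure_iff_nhdsWithin_neBot.mp hmem
    have htend : Filter.Tendsto Z (nhdsWithin t (Ico (0:ℝ) t)) (nhds (Z t)) :=
      (hZ t ht).mono (fun s hs => hs.1)
    exact isClosed_closure.mem_of_tendsto htend
      (Filter.eventually_of_mem self_mem_nhdsWithin fun s hs => key s hs.1 hs.2)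

private lemma aux_intOn {k : ℕ} {h : ℝ → Euc k} {R : ℝ} {a b : ℝ}
    (hm : AEStronglyMeasurable h (volume.restrict (Ioc a b)))
    (hb : ∀ s, ‖h s‖ ≤ R) : IntegrableOn h (Ioc a b) volume :=
  Integrable.mono' (integrableOn_const measure_Ioc_lt_top.ne) hm
    (Filter.Eventually.of_forall hb)

private lemma aux_intInt {k : ℕ} {h : ℝ → Euc k} {R : ℝ}
    (hm : Measurable h) (hb : ∀ s, ‖h s‖ ≤ R) (a b : ℝ) :
    IntervalIntegrable h volume a b :=
  ⟨aux_intOn hm.aestronglyMeasurable.restrict hb,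
   aux_intOn hm.aestronglyMeasurable.restrict hb⟩

/-- Integral form of Gronwall's inequality. -/
private lemma aux_gronwall {u : ℝ → ℝ} {c L T : ℝ}
    (hu : ContinuousOn u (Ici (0:ℝ))) (hc : 0 ≤ c) (hL : 0 ≤ L)
    (hnn : ∀ s, 0 ≤ s → 0 ≤ u s)
    (h : ∀ t, 0 ≤ t → t ≤ T → u t ≤ c + L * ∫ s in Ioc (0:ℝ) t, u s) :
    ∀ t, 0 ≤ t → t ≤ T → u t ≤ c * Real.exp (L * T) := by
  intro t ht0 htT
  set v : ℝ → ℝ := fun r => c + L * ∫ s in Ioc (0:ℝ) r, u s with hvdef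
  have huI : IntegrableOn u (Icc (0:ℝ) T) := (hu.mono Icc_subset_Ici_self).integrableOn_Icc
  have hvc : ContinuousOn v (Icc (0:ℝ) T) :=
    continuousOn_const.add (continuousOn_const.mul
      (intervalIntegral.continuousOn_primitive huI))
  have hder : ∀ x ∈ Ico (0:ℝ) T, HasDerivWithinAt v (L * u x) (Ici x) x := by
    intro x hx
    have hsub : Ioi x ⊆ Ici (0:ℝ) := fun s hs => le_of_lt (lt_of_le_of_lt hx.1 hs)
    have hF : HasDerivWithinAt (fun r => ∫ s in (0:ℝ)..r, u s) (u x) (Ici x) x := by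
      refine intervalIntegral.integral_hasDerivWithinAt_right ?_
        ⟨Ioi x, self_mem_nhdsWithin, (hu.mono hsub).aestronglyMeasurable measurableSet_Ioi⟩
        ((hu x hx.1).mono hsub)
      exact (hu.mono (by rw [uIcc_of_le hx.1]; exact Icc_subset_Ici_self)).intervalIntegrable
    have h2 : HasDerivWithinAt (fun r => c + L * ∫ s in (0:ℝ)..r, u s) (L * u x) (Ici x) x :=
      (hF.const_mul L).const_add c
    refine h2.congr (fun y hy => ?_) ?_
    · simp only [hvdef, intervalIntegral.integral_of_le (le_trans hx.1 hy)]
    · simp only [hvdef, intervalIntegral.integral_of_le hx.1]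
  have hv0 : ‖v 0‖ ≤ c := by
    simp only [hvdef, Set.Ioc_self, Measure.restrict_empty, integral_zero_measure,
      mul_zero, add_zero, Real.norm_eq_abs, abs_of_nonneg hc, le_refl]
  have hbd : ∀ x ∈ Ico (0:ℝ) T, ‖L * u x‖ ≤ L * ‖v x‖ + 0 := by
    intro x hx
    have h1 : u x ≤ v x := h x hx.1 hx.2.le
    have h2 : v x ≤ |v x| := le_abs_self _
    rw [Real.norm_eq_abs, abs_of_nonneg (mul_nonneg hL (hnn x hx.1)), add_zero,
      Real.norm_eq_abs]
    nlinarith [mul_le_mul_of_nonneg_left h1 hL, mul_le_mul_of_nonneg_left h2 hL]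
  have hg := norm_le_gronwallBound_of_norm_deriv_right_le (f' := fun x => L * u x)
    hvc hder hv0 hbd t ⟨ht0, htT⟩
  rw [gronwallBound_ε0, sub_zero] at hg
  have h1 : u t ≤ v t := h t ht0 htT
  have h2 : v t ≤ ‖v t‖ := by rw [Real.norm_eq_abs]; exact le_abs_self _
  have h3 : c * Real.exp (L * t) ≤ c * Real.exp (L * T) :=
    mul_le_mul_of_nonneg_left (Real.exp_le_exp.mpr (mul_le_mul_of_nonneg_left htT hL)) hc
  exact ((h1.trans h2).trans hg).trans h3

private lemma aux_epsY_nonneg {m m' : ℕ} (B : Set (Euc m')) (ΩY : Set (Euc m))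
    (ξY : Euc m) (Ytraj : Euc m → (ℝ → Euc m') → ℝ → Euc m)
    (y₁ y₂ : Euc m) (tY : ℝ) : 0 ≤ epsY B ΩY ξY Ytraj y₁ y₂ tY := by
  unfold epsY
  exact Real.iSup_nonneg fun _ => Real.iSup_nonneg fun _ => le_max_right _ _

private lemma aux_epsY_le {m m' : ℕ} {B : Set (Euc m')} {ΩY : Set (Euc m)} {ξY : Euc m}
    (hξY : ‖ξY‖ = 1) (hΩY : ΩY = {y : Euc m | 0 < (inner ℝ ξY y : ℝ)})
    {g : Euc m → Euc m' → Euc m} {L M : ℝ}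
    (hgc : Continuous fun p : Euc m × Euc m' => g p.1 p.2)
    (hgb : ∀ y b, ‖g y b‖ ≤ M)
    (hgL : ∀ y₁ y₂ b, b ∈ B → ‖g y₁ b - g y₂ b‖ ≤ L * ‖y₁ - y₂‖)
    (hL : 0 ≤ L)
    {Ytraj : Euc m → (ℝ → Euc m') → ℝ → Euc m}
    (hYtraj : ∀ y β, IsControl B β → IsTrajectory g y β (Ytraj y β))
    {y₁ y₂ : Euc m} (hy₁ : y₁ ∈ closure ΩY) {tY : ℝ} (htY : 0 < tY) :
    epsY B ΩY ξY Ytraj y₁ y₂ tY ≤ Real.exp (L * tY) * ‖y₁ - y₂‖ := by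
  have hrhs : 0 ≤ Real.exp (L * tY) * ‖y₁ - y₂‖ :=
    mul_nonneg (Real.exp_pos _).le (norm_nonneg _)
  unfold epsY
  refine Real.iSup_le (fun β => Real.iSup_le (fun tt => ?_) hrhs) hrhs
  obtain ⟨β, hβ⟩ := β
  obtain ⟨t, ht0, htle⟩ := tt
  obtain ⟨hY₁c, hY₁0, hY₁⟩ := hYtraj y₁ β hβ
  obtain ⟨hY₂c, hY₂0, hY₂⟩ := hYtraj y₂ β hβ
  have htT : t ≤ tY := (ENNReal.ofReal_le_ofReal_iff htY.le).mp
    (htle.trans (min_le_right _ _))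
  have hInt : ∀ (Y : ℝ → Euc m), ContinuousOn Y (Ici 0) → ∀ r : ℝ,
      IntegrableOn (fun s => g (Y s) (β s)) (Ioc (0:ℝ) r) volume := by
    intro Y hY r
    refine aux_intOn ?_ (fun s => hgb _ _)
    have hYm : AEMeasurable Y (volume.restrict (Ioc (0:ℝ) r)) :=
      (hY.mono (fun s hs => le_of_lt hs.1)).aemeasurable measurableSet_Ioc
    exact (hgc.measurable.comp_aemeasurable
      (hYm.prodMk hβ.1.aemeasurable)).aestronglyMeasurable
  have key : ∀ r, 0 ≤ r → r ≤ tY → ‖Ytraj y₁ β r - Ytraj y₂ β r‖ ≤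
      ‖y₁ - y₂‖ + L * ∫ s in Ioc (0:ℝ) r, ‖Ytraj y₁ β s - Ytraj y₂ β s‖ := by
    intro r hr0 _
    have heq : Ytraj y₁ β r - Ytraj y₂ β r
        = (y₁ - y₂) + ∫ s in Ioc (0:ℝ) r,
            (g (Ytraj y₁ β s) (β s) - g (Ytraj y₂ β s) (β s)) := by
      rw [hY₁ r hr0, hY₂ r hr0, integral_sub (hInt _ hY₁c r) (hInt _ hY₂c r)]
      abel
    have hRint : IntegrableOn (fun s => L * ‖Ytraj y₁ β s - Ytraj y₂ β s‖)
        (Ioc (0:ℝ) r) volume :=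
      (((continuousOn_const.mul ((hY₁c.sub hY₂c).norm)).mono
        Icc_subset_Ici_self).integrableOn_Icc).mono_set Ioc_subset_Icc_self
    rw [heq]
    refine (norm_add_le _ _).trans (add_le_add_right ?_ _)
    calc ‖∫ s in Ioc (0:ℝ) r, (g (Ytraj y₁ β s) (β s) - g (Ytraj y₂ β s) (β s))‖
        ≤ ∫ s in Ioc (0:ℝ) r, ‖g (Ytraj y₁ β s) (β s) - g (Ytraj y₂ β s) (β s)‖ :=
          norm_integral_le_integral_norm _
      _ ≤ ∫ s in Ioc (0:ℝ) r, L * ‖Ytraj y₁ β s - Ytraj y₂ β s‖ :=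
          setIntegral_mono_on ((hInt _ hY₁c r).sub (hInt _ hY₂c r)).norm hRint
            measurableSet_Ioc (fun s _ => hgL _ _ _ (hβ.2 s))
      _ = L * ∫ s in Ioc (0:ℝ) r, ‖Ytraj y₁ β s - Ytraj y₂ β s‖ :=
          MeasureTheory.integral_const_mul _ _
  have hu := aux_gronwall ((hY₁c.sub hY₂c).norm) (norm_nonneg (y₁ - y₂)) hL
    (fun s _ => norm_nonneg _) key t ht0 htT
  have hY₁mem : Ytraj y₁ β t ∈ closure ΩY :=
    aux_mem_closure hY₁c (by rw [hY₁0]; exact hy₁) ht0 (htle.trans (min_le_left _ _))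
  have hpos : 0 ≤ (inner ℝ ξY (Ytraj y₁ β t) : ℝ) := aux_inner_nonneg ξY (hΩY ▸ hY₁mem)
  refine max_le ?_ hrhs
  have hcs : (inner ℝ ξY (Ytraj y₁ β t - Ytraj y₂ β t) : ℝ)
      ≤ ‖Ytraj y₁ β t - Ytraj y₂ β t‖ := by
    have h := real_inner_le_norm ξY (Ytraj y₁ β t - Ytraj y₂ β t)
    rwa [hξY, one_mul] at h
  have hsub : (inner ℝ ξY (Ytraj y₁ β t - Ytraj y₂ β t) : ℝ)
      = (inner ℝ ξY (Ytraj y₁ β t) : ℝ) - (inner ℝ ξY (Ytraj y₂ β t) : ℝ) :=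
    inner_sub_right _ _ _
  have hu' : ‖Ytraj y₁ β t - Ytraj y₂ β t‖ ≤ Real.exp (L * tY) * ‖y₁ - y₂‖ := by
    rw [mul_comm]; exact hu
  linarith

private lemma aux_shift_bound {n m' : ℕ} (D : Euc m' →L[ℝ] Euc n) {B : Set (Euc m')}
    {β : ℝ → Euc m'} (hβ : IsControl B β) {b₀ : Euc m'} (hb₀ : b₀ ∈ B)
    {S : ℝ} (hS : ∀ b ∈ B, ‖D b‖ ≤ S) {t0 c : ℝ} (ht0 : 0 ≤ t0) (hc : 0 ≤ c) (r : ℝ) :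
    ‖(∫ s in Ioc (0:ℝ) r, D (β s)) - ∫ s in Ioc (0:ℝ) r,
        D ((fun u => if u ≤ t0 then β u else if u ≤ t0 + c then b₀ else β (u - c)) s)‖
      ≤ 2 * S * c := by
  set βt : ℝ → Euc m' :=
    fun u => if u ≤ t0 then β u else if u ≤ t0 + c then b₀ else β (u - c) with hβt
  have hS0 : 0 ≤ S := (norm_nonneg (D b₀)).trans (hS b₀ hb₀)
  have hβtB : ∀ s, βt s ∈ B := by
    intro s
    simp only [hβt]
    split_ifs
    · exact hβ.2 s
    · exact hb₀
    · exact hβ.2 _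
  have hβtm : Measurable βt := by
    refine Measurable.ite measurableSet_Iic hβ.1 ?_
    exact Measurable.ite measurableSet_Iic measurable_const
      (hβ.1.comp (measurable_id.sub measurable_const))
  have hint1 : ∀ a b : ℝ, IntervalIntegrable (fun s => D (β s)) volume a b :=
    aux_intInt (D.continuous.measurable.comp hβ.1) (fun s => hS _ (hβ.2 s))
  have hint2 : ∀ a b : ℝ, IntervalIntegrable (fun s => D (βt s)) volume a b :=
    aux_intInt (D.continuous.measurable.comp hβtm) (fun s => hS _ (hβtB s))
  have hintc : ∀ a b : ℝ, IntervalIntegrable (fun _ : ℝ => D b₀) volume a b :=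
    fun a b => intervalIntegrable_const
  rcases le_or_gt r 0 with hr | hr
  · rw [Set.Ioc_eq_empty (by exact fun h => absurd (h.trans_le hr) (lt_irrefl 0)),
      Measure.restrict_empty, integral_zero_measure, integral_zero_measure, sub_zero,
      norm_zero]
    positivity
  rw [← intervalIntegral.integral_of_le hr.le, ← intervalIntegral.integral_of_le hr.le]
  rcases le_or_gt r t0 with hrt0 | hrt0
  · have e0 : (∫ s in (0:ℝ)..r, D (βt s)) = ∫ s in (0:ℝ)..r, D (β s) := by
      refine intervalIntegral.integral_congr (fun s hs => ?_)
      rw [uIcc_of_le hr.le] at hs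
      simp only [hβt, if_pos (hs.2.trans hrt0)]
    rw [e0, sub_self, norm_zero]
    positivity
  · have e1 : (∫ s in (0:ℝ)..t0, D (βt s)) = ∫ s in (0:ℝ)..t0, D (β s) := by
      refine intervalIntegral.integral_congr (fun s hs => ?_)
      rw [uIcc_of_le ht0] at hs
      simp only [hβt, if_pos hs.2]
    rcases le_or_gt r (t0 + c) with hrc | hrc
    · -- t0 < r ≤ t0 + c
      have e2 : (∫ s in t0..r, D (βt s)) = ∫ s in t0..r, D b₀ := by
        refine intervalIntegral.integral_congr_ae ?_
        filter_upwards with s hs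
        rw [Set.uIoc_of_le hrt0.le] at hs
        simp only [hβt, if_neg (not_le.mpr hs.1), if_pos (hs.2.trans hrc)]
      have s1 : (∫ s in (0:ℝ)..t0, D (βt s)) + ∫ s in t0..r, D (βt s)
          = ∫ s in (0:ℝ)..r, D (βt s) :=
        intervalIntegral.integral_add_adjacent_intervals (hint2 0 t0) (hint2 t0 r)
      have s2 : (∫ s in (0:ℝ)..t0, D (β s)) + ∫ s in t0..r, D (β s)
          = ∫ s in (0:ℝ)..r, D (β s) :=
        intervalIntegral.integral_add_adjacent_intervals (hint1 0 t0) (hint1 t0 r)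
      have key : (∫ s in (0:ℝ)..r, D (β s)) - (∫ s in (0:ℝ)..r, D (βt s))
          = ∫ s in t0..r, (D (β s) - D b₀) := by
        rw [← s1, ← s2, e1, e2, intervalIntegral.integral_sub (hint1 t0 r) (hintc t0 r)]
        abel
      rw [key]
      have hb := intervalIntegral.norm_integral_le_of_norm_le_const (C := 2 * S)
        (f := fun s => D (β s) - D b₀) (a := t0) (b := r) (fun x _ => by
          calc ‖D (β x) - D b₀‖ ≤ ‖D (β x)‖ + ‖D b₀‖ := norm_sub_le _ _
            _ ≤ S + S := add_le_add (hS _ (hβ.2 x)) (hS _ hb₀)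
            _ = 2 * S := by ring)
      refine hb.trans ?_
      rw [abs_of_nonneg (by linarith)]
      have : r - t0 ≤ c := by linarith
      nlinarith
    · -- t0 + c < r
      have e2 : (∫ s in t0..(t0 + c), D (βt s)) = ∫ s in t0..(t0 + c), D b₀ := by
        refine intervalIntegral.integral_congr_ae ?_
        filter_upwards with s hs
        rw [Set.uIoc_of_le (by linarith)] at hs
        simp only [hβt, if_neg (not_le.mpr hs.1), if_pos hs.2]
      have e3 : (∫ s in (t0 + c)..r, D (βt s)) = ∫ s in (t0 + c)..r, D (β (s - c)) := by
        refine intervalIntegral.integral_congr_ae ?_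
        filter_upwards with s hs
        rw [Set.uIoc_of_le hrc.le] at hs
        have h1 : ¬ s ≤ t0 := not_le.mpr (by linarith [hs.1])
        have h2 : ¬ s ≤ t0 + c := not_le.mpr hs.1
        simp only [hβt, if_neg h1, if_neg h2]
      have e4 : (∫ s in (t0 + c)..r, D (β (s - c))) = ∫ s in t0..(r - c), D (β s) := by
        rw [intervalIntegral.integral_comp_sub_right (fun s => D (β s)) c,
          add_sub_cancel_right]
      have s1 : (∫ s in (0:ℝ)..t0, D (βt s)) + ∫ s in t0..(t0 + c), D (βt s)
          = ∫ s in (0:ℝ)..(t0 + c), D (βt s) :=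
        intervalIntegral.integral_add_adjacent_intervals (hint2 0 t0) (hint2 t0 (t0 + c))
      have s2 : (∫ s in (0:ℝ)..(t0 + c), D (βt s)) + ∫ s in (t0 + c)..r, D (βt s)
          = ∫ s in (0:ℝ)..r, D (βt s) :=
        intervalIntegral.integral_add_adjacent_intervals (hint2 0 (t0 + c)) (hint2 (t0 + c) r)
      have s3 : (∫ s in (0:ℝ)..t0, D (β s)) + ∫ s in t0..(r - c), D (β s)
          = ∫ s in (0:ℝ)..(r - c), D (β s) :=
        intervalIntegral.integral_add_adjacent_intervals (hint1 0 t0) (hint1 t0 (r - c))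
      have s4 : (∫ s in (0:ℝ)..(r - c), D (β s)) + ∫ s in (r - c)..r, D (β s)
          = ∫ s in (0:ℝ)..r, D (β s) :=
        intervalIntegral.integral_add_adjacent_intervals (hint1 0 (r - c)) (hint1 (r - c) r)
      have key : (∫ s in (0:ℝ)..r, D (β s)) - (∫ s in (0:ℝ)..r, D (βt s))
          = (∫ s in (r - c)..r, D (β s)) - ∫ s in t0..(t0 + c), D b₀ := by
        rw [← s2, ← s1, e1, e2, e3, e4, ← s4, ← s3]
        abel
      rw [key]
      have hb1 := intervalIntegral.norm_integral_le_of_norm_le_const (C := S)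
        (f := fun s => D (β s)) (a := r - c) (b := r) (fun x _ => hS _ (hβ.2 x))
      have hb2 := intervalIntegral.norm_integral_le_of_norm_le_const (C := S)
        (f := fun _ : ℝ => D b₀) (a := t0) (b := t0 + c) (fun x _ => hS _ hb₀)
      rw [sub_sub_cancel, abs_of_nonneg hc] at hb1
      rw [add_sub_cancel_left, abs_of_nonneg hc] at hb2
      calc ‖(∫ s in (r - c)..r, D (β s)) - ∫ s in t0..(t0 + c), D b₀‖
          ≤ ‖∫ s in (r - c)..r, D (β s)‖ + ‖∫ s in t0..(t0 + c), D b₀‖ := norm_sub_le _ _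
        _ ≤ S * c + S * c := add_le_add hb1 hb2
        _ = 2 * S * c := by ring

private lemma aux_mod_isControl {m m' : ℕ} {B : Set (Euc m')} (ΩY : Set (Euc m))
    (ξY : Euc m) (Ytraj : Euc m → (ℝ → Euc m') → ℝ → Euc m) {b₀ : Euc m'}
    (hb₀ : b₀ ∈ B) (y₁ y₂ : Euc m) (kY tY : ℝ) {β : ℝ → Euc m'}
    (hβ : IsControl B β) :
    IsControl B (modControl B ΩY ξY Ytraj (fun _ => b₀) y₁ y₂ kY tY β) := by
  have hform : modControl B ΩY ξY Ytraj (fun _ => b₀) y₁ y₂ kY tY β = fun t =>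
      if t ≤ hitBdryTime ΩY (Ytraj y₂ β) tY then β t
      else if t ≤ hitBdryTime ΩY (Ytraj y₂ β) tY
          + kY * epsY B ΩY ξY Ytraj y₁ y₂ tY then b₀
      else β (t - kY * epsY B ΩY ξY Ytraj y₁ y₂ tY) := rfl
  rw [hform]
  constructor
  · refine Measurable.ite measurableSet_Iic hβ.1 ?_
    exact Measurable.ite measurableSet_Iic measurable_const
      (hβ.1.comp (measurable_id.sub measurable_const))
  · intro t
    dsimp only
    split_ifs
    · exact hβ.2 t
    · exact hb₀
    · exact hβ.2 _

end AuxHelpers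

/-- Estimate (28) on the constraint-violation error `ε_X` under weak
decoupling: in the Section 7 setting, for every horizon and every pair of
compact sets there is a constant `C > 0` such that
`0 ≤ ε_X ≤ C(‖x₁−x₂‖ + ‖y₁−y₂‖)`, where `ε_X` is the supremum over all
non-anticipating strategies `γ`, controls `β` and admissible times of the
constraint violation of `X(⋅;x₁,γ[β̃],β)`, and `β̃` is the non-anticipating
modification of `β` associated with `y₁, y₂`. -/
theorem epsX_estimate
    {n m m' : ℕ}
    (ΩX : Set (Euc n)) (ΩY : Set (Euc m)) (ξX : Euc n) (ξY : Euc m)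
    (A : Set (Euc n)) (B : Set (Euc m'))
    (f : Euc n → Euc n) (D : Euc m' →L[ℝ] Euc n)
    (g : Euc m → Euc m' → Euc m) (L M : ℝ)
    -- half-space domains with unit inward normals ξX, ξY
    (hξX : ‖ξX‖ = 1) (hξY : ‖ξY‖ = 1)
    (hΩX : ΩX = {x : Euc n | 0 < (inner ℝ ξX x : ℝ)})
    (hΩY : ΩY = {y : Euc m | 0 < (inner ℝ ξY y : ℝ)})
    -- compact control sets with DB ⊆ A
    (hA : IsCompact A) (hAne : A.Nonempty)
    (hB : IsCompact B) (hBne : B.Nonempty)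
    (hDB : ∀ b ∈ B, D b ∈ A)
    (hL : 0 ≤ L) (hM : 0 < M)
    -- regularity of the dynamics
    (hfc : Continuous f) (hfb : ∀ x, ‖f x‖ ≤ M)
    (hfL : ∀ x₁ x₂, ‖f x₁ - f x₂‖ ≤ L * ‖x₁ - x₂‖)
    (hgc : Continuous fun p : Euc m × Euc m' => g p.1 p.2)
    (hgb : ∀ y b, ‖g y b‖ ≤ M)
    (hgL : ∀ y₁ y₂ b, b ∈ B → ‖g y₁ b - g y₂ b‖ ≤ L * ‖y₁ - y₂‖)
    -- trajectory maps: weakly decoupled for player X, decoupled for player Y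
    (XT : Euc n → (ℝ → Euc n) → (ℝ → Euc m') → ℝ → Euc n)
    (hXT : ∀ x α β, IsControl A α → IsControl B β →
      IsTrajectoryAffine f D x α β (XT x α β))
    (Ytraj : Euc m → (ℝ → Euc m') → ℝ → Euc m)
    (hYtraj : ∀ y β, IsControl B β → IsTrajectory g y β (Ytraj y β))
    -- data for the non-anticipating tuning β ↦ β̃ of the second player
    (b₀ : Euc m') (hb₀ : b₀ ∈ B) (ζY rY : ℝ) (hζY : 0 < ζY) (hrY : 0 < rY)
    (hinY : ∀ y ∈ closure ΩY, (inner ℝ ξY y : ℝ) ≤ rY →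
      ζY ≤ (inner ℝ ξY (g y b₀) : ℝ))
    (kY tY : ℝ) (hkY : 0 < kY) (htY : 0 < tY)
 :
    ∀ T tX : ℝ, 0 < tX → tX ≤ T → tY ≤ T →
    ∀ KX : Set (Euc n), IsCompact KX → KX ⊆ closure ΩX →
    ∀ KY : Set (Euc m), IsCompact KY → KY ⊆ closure ΩY →
    ∃ C > (0:ℝ), ∀ x₁ ∈ KX, ∀ x₂ ∈ KX, ∀ y₁ ∈ KY, ∀ y₂ ∈ KY,
      0 ≤ epsX A B ΩX ξX XT
          (modControl B ΩY ξY Ytraj (fun _ => b₀) y₁ y₂ kY tY) x₁ x₂ tX ∧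
      epsX A B ΩX ξX XT
          (modControl B ΩY ξY Ytraj (fun _ => b₀) y₁ y₂ kY tY) x₁ x₂ tX ≤
        C * (‖x₁ - x₂‖ + ‖y₁ - y₂‖) := by
  intro T tX htX htXT htYT KX hKX hKXsub KY hKY hKYsub
  obtain ⟨RB, hRBsub⟩ := hB.isBounded.subset_closedBall 0
  have hRB : ∀ b ∈ B, ‖b‖ ≤ RB := fun b hb => by
    simpa [mem_closedBall_zero_iff] using hRBsub hb
  obtain ⟨RA, hRAsub⟩ := hA.isBounded.subset_closedBall 0
  have hRA : ∀ a ∈ A, ‖a‖ ≤ RA := fun a ha => by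
    simpa [mem_closedBall_zero_iff] using hRAsub ha
  set S : ℝ := ‖D‖ * RB with hSdef
  have hS : ∀ b ∈ B, ‖D b‖ ≤ S := fun b hb =>
    (D.le_opNorm b).trans (mul_le_mul_of_nonneg_left (hRB b hb) (norm_nonneg _))
  have hS0 : 0 ≤ S := (norm_nonneg (D b₀)).trans (hS b₀ hb₀)
  set q : ℝ := 2 * S * kY * Real.exp (L * tY) with hqdef
  have hq0 : 0 ≤ q :=
    mul_nonneg (mul_nonneg (mul_nonneg (by norm_num) hS0) hkY.le) (Real.exp_pos _).le
  set C : ℝ := Real.exp (L * tX) * (1 + q) with hCdef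
  have hC : 0 < C := mul_pos (Real.exp_pos _) (by linarith)
  refine ⟨C, hC, ?_⟩
  intro x₁ hx₁ x₂ hx₂ y₁ hy₁ y₂ hy₂
  set ε : ℝ := epsY B ΩY ξY Ytraj y₁ y₂ tY with hεdef
  have hε0 : 0 ≤ ε := aux_epsY_nonneg B ΩY ξY Ytraj y₁ y₂ tY
  have hεle : ε ≤ Real.exp (L * tY) * ‖y₁ - y₂‖ :=
    aux_epsY_le hξY hΩY hgc hgb hgL hL hYtraj (hKYsub hy₁) htY
  constructor
  · unfold epsX
    exact Real.iSup_nonneg fun _ => Real.iSup_nonneg fun _ =>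
      Real.iSup_nonneg fun _ => le_max_right _ _
  · have hRHS0 : 0 ≤ C * (‖x₁ - x₂‖ + ‖y₁ - y₂‖) :=
      mul_nonneg hC.le (add_nonneg (norm_nonneg _) (norm_nonneg _))
    unfold epsX
    refine Real.iSup_le (fun γ => Real.iSup_le (fun β =>
      Real.iSup_le (fun tt => ?_) hRHS0) hRHS0) hRHS0
    obtain ⟨γ, hγ⟩ := γ
    obtain ⟨β, hβ⟩ := β
    obtain ⟨t, ht0, htle⟩ := tt
    set βt : ℝ → Euc m' := modControl B ΩY ξY Ytraj (fun _ => b₀) y₁ y₂ kY tY β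
      with hβtdef
    have hβtc : IsControl B βt := aux_mod_isControl ΩY ξY Ytraj hb₀ y₁ y₂ kY tY hβ
    set α : ℝ → Euc n := γ βt with hαdef
    have hαc : IsControl A α := hγ.1 βt hβtc
    obtain ⟨hX₁c, hX₁0, hX₁⟩ := hXT x₁ α β hαc hβ
    obtain ⟨hX₂c, hX₂0, hX₂⟩ := hXT x₂ α βt hαc hβtc
    have htX' : t ≤ tX := (ENNReal.ofReal_le_ofReal_iff htX.le).mp
      (htle.trans (min_le_right _ _))
    have hX₂mem : XT x₂ α βt t ∈ closure ΩX :=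
      aux_mem_closure hX₂c (by rw [hX₂0]; exact hKXsub hx₂) ht0
        (htle.trans (min_le_left _ _))
    have hpos : 0 ≤ (inner ℝ ξX (XT x₂ α βt t) : ℝ) := aux_inner_nonneg ξX (hΩX ▸ hX₂mem)
    have hDbound : ∀ r : ℝ, ‖(∫ s in Ioc (0:ℝ) r, D (β s))
        - ∫ s in Ioc (0:ℝ) r, D (βt s)‖ ≤ 2 * S * (kY * ε) := by
      intro r
      have hform : βt = fun u => if u ≤ hitBdryTime ΩY (Ytraj y₂ β) tY then β u
          else if u ≤ hitBdryTime ΩY (Ytraj y₂ β) tY + kY * ε then b₀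
          else β (u - kY * ε) := rfl
      rw [hform]
      exact aux_shift_bound D hβ hb₀ hS ENNReal.toReal_nonneg
        (mul_nonneg hkY.le hε0) r
    have hfint : ∀ (Z : ℝ → Euc n), ContinuousOn Z (Ici 0) → ∀ r : ℝ,
        IntegrableOn (fun s => f (Z s)) (Ioc (0:ℝ) r) volume := fun Z hZ r =>
      aux_intOn ((hfc.comp_continuousOn
        (hZ.mono (fun s hs => le_of_lt hs.1))).aestronglyMeasurable measurableSet_Ioc)
        (fun s => hfb _)
    have hαint : ∀ r : ℝ, IntegrableOn α (Ioc (0:ℝ) r) volume := fun r =>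
      aux_intOn hαc.1.aestronglyMeasurable.restrict (fun s => hRA _ (hαc.2 s))
    have hDint : ∀ (u : ℝ → Euc m'), IsControl B u → ∀ r : ℝ,
        IntegrableOn (fun s => D (u s)) (Ioc (0:ℝ) r) volume := fun u hu r =>
      aux_intOn (D.continuous.measurable.comp hu.1).aestronglyMeasurable.restrict
        (fun s => hS _ (hu.2 s))
    set c0 : ℝ := ‖x₁ - x₂‖ + 2 * S * (kY * ε) with hc0def
    have hc00 : 0 ≤ c0 := add_nonneg (norm_nonneg _)
      (mul_nonneg (mul_nonneg (by norm_num) hS0) (mul_nonneg hkY.le hε0))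
    have key : ∀ r, 0 ≤ r → r ≤ tX → ‖XT x₁ α β r - XT x₂ α βt r‖ ≤
        c0 + L * ∫ s in Ioc (0:ℝ) r, ‖XT x₁ α β s - XT x₂ α βt s‖ := by
      intro r hr0 _
      have hI1 : IntegrableOn (fun s => f (XT x₁ α β s) + α s + D (β s))
          (Ioc (0:ℝ) r) volume := ((hfint _ hX₁c r).add (hαint r)).add (hDint β hβ r)
      have hI2 : IntegrableOn (fun s => f (XT x₂ α βt s) + α s + D (βt s))
          (Ioc (0:ℝ) r) volume := ((hfint _ hX₂c r).add (hαint r)).add (hDint βt hβtc r)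
      have hfd : IntegrableOn (fun s => f (XT x₁ α β s) - f (XT x₂ α βt s))
          (Ioc (0:ℝ) r) volume := (hfint _ hX₁c r).sub (hfint _ hX₂c r)
      have hDd : IntegrableOn (fun s => D (β s) - D (βt s))
          (Ioc (0:ℝ) r) volume := (hDint β hβ r).sub (hDint βt hβtc r)
      have heq : XT x₁ α β r - XT x₂ α βt r = (x₁ - x₂)
          + (∫ s in Ioc (0:ℝ) r, (f (XT x₁ α β s) - f (XT x₂ α βt s)))
          + ((∫ s in Ioc (0:ℝ) r, D (β s)) - ∫ s in Ioc (0:ℝ) r, D (βt s)) := by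
        rw [hX₁ r hr0, hX₂ r hr0]
        have e1 : (x₁ + ∫ s in Ioc (0:ℝ) r, (f (XT x₁ α β s) + α s + D (β s)))
            - (x₂ + ∫ s in Ioc (0:ℝ) r, (f (XT x₂ α βt s) + α s + D (βt s)))
            = (x₁ - x₂) + ∫ s in Ioc (0:ℝ) r, ((f (XT x₁ α β s) + α s + D (β s))
                - (f (XT x₂ α βt s) + α s + D (βt s))) := by
          rw [integral_sub hI1 hI2]; abel
        rw [e1]
        have e2 : ∀ s : ℝ, (f (XT x₁ α β s) + α s + D (β s))
            - (f (XT x₂ α βt s) + α s + D (βt s))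
            = (f (XT x₁ α β s) - f (XT x₂ α βt s)) + (D (β s) - D (βt s)) :=
          fun s => by abel
        simp only [e2]
        rw [integral_add hfd hDd, integral_sub (hDint β hβ r) (hDint βt hβtc r)]
        abel
      have hRint : IntegrableOn (fun s => L * ‖XT x₁ α β s - XT x₂ α βt s‖)
          (Ioc (0:ℝ) r) volume :=
        (((continuousOn_const.mul ((hX₁c.sub hX₂c).norm)).mono
          Icc_subset_Ici_self).integrableOn_Icc).mono_set Ioc_subset_Icc_self
      have hmid : ‖∫ s in Ioc (0:ℝ) r, (f (XT x₁ α β s) - f (XT x₂ α βt s))‖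
          ≤ L * ∫ s in Ioc (0:ℝ) r, ‖XT x₁ α β s - XT x₂ α βt s‖ := by
        calc ‖∫ s in Ioc (0:ℝ) r, (f (XT x₁ α β s) - f (XT x₂ α βt s))‖
            ≤ ∫ s in Ioc (0:ℝ) r, ‖f (XT x₁ α β s) - f (XT x₂ α βt s)‖ :=
              norm_integral_le_integral_norm _
          _ ≤ ∫ s in Ioc (0:ℝ) r, L * ‖XT x₁ α β s - XT x₂ α βt s‖ :=
              setIntegral_mono_on ((hfint _ hX₁c r).sub (hfint _ hX₂c r)).norm hRint
                measurableSet_Ioc (fun s _ => hfL _ _)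
          _ = L * ∫ s in Ioc (0:ℝ) r, ‖XT x₁ α β s - XT x₂ α βt s‖ :=
              MeasureTheory.integral_const_mul _ _
      rw [heq]
      have htri := norm_add₃_le (E := Euc n) (a := x₁ - x₂)
        (b := ∫ s in Ioc (0:ℝ) r, (f (XT x₁ α β s) - f (XT x₂ α βt s)))
        (c := (∫ s in Ioc (0:ℝ) r, D (β s)) - ∫ s in Ioc (0:ℝ) r, D (βt s))
      have := hDbound r
      rw [hc0def]
      linarith
    have hu := aux_gronwall ((hX₁c.sub hX₂c).norm) hc00 hL
      (fun s _ => norm_nonneg _) key t ht0 htX'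
    refine max_le ?_ hRHS0
    have hcs : (inner ℝ ξX (XT x₂ α βt t - XT x₁ α β t) : ℝ)
        ≤ ‖XT x₁ α β t - XT x₂ α βt t‖ := by
      have h := real_inner_le_norm ξX (XT x₂ α βt t - XT x₁ α β t)
      rw [hξX, one_mul] at h
      rwa [norm_sub_rev] at h
    have hsub : (inner ℝ ξX (XT x₂ α βt t - XT x₁ α β t) : ℝ)
        = (inner ℝ ξX (XT x₂ α βt t) : ℝ) - (inner ℝ ξX (XT x₁ α β t) : ℝ) :=
      inner_sub_right _ _ _
    have hchain : c0 * Real.exp (L * tX) ≤ C * (‖x₁ - x₂‖ + ‖y₁ - y₂‖) := by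
      have h1 : 2 * S * (kY * ε) ≤ q * ‖y₁ - y₂‖ := by
        calc 2 * S * (kY * ε) = (2 * S * kY) * ε := by ring
          _ ≤ (2 * S * kY) * (Real.exp (L * tY) * ‖y₁ - y₂‖) :=
            mul_le_mul_of_nonneg_left hεle
              (mul_nonneg (mul_nonneg (by norm_num) hS0) hkY.le)
          _ = q * ‖y₁ - y₂‖ := by rw [hqdef]; ring
      have h2 : c0 ≤ (1 + q) * (‖x₁ - x₂‖ + ‖y₁ - y₂‖) := by
        have ha := norm_nonneg (x₁ - x₂)
        have hb' := norm_nonneg (y₁ - y₂)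
        rw [hc0def]
        nlinarith [mul_nonneg hq0 ha]
      calc c0 * Real.exp (L * tX)
          ≤ ((1 + q) * (‖x₁ - x₂‖ + ‖y₁ - y₂‖)) * Real.exp (L * tX) :=
            mul_le_mul_of_nonneg_right h2 (Real.exp_pos _).le
        _ = C * (‖x₁ - x₂‖ + ‖y₁ - y₂‖) := by rw [hCdef]; ring
    have hu' : ‖XT x₁ α β t - XT x₂ α βt t‖ ≤ c0 * Real.exp (L * tX) := hu
    change -(inner ℝ ξX (XT x₁ α β t) : ℝ) ≤ C * (‖x₁ - x₂‖ + ‖y₁ - y₂‖)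
    linarith


end
end

section
/- Time-shift trajectory estimate: let f:ℝⁿ→ℝⁿ be L-Lipschitz and bounded by M, let α be a measurable control with values in a compact set A, let β be a measurable control with values in a compact set B, and let D be a matrix with sup_{b∈B}‖Db‖ ≤ C'. Let X solve X'(s) = f(X(s)) + α(s) + Dβ(s) on [t₀, T] and let X̃ solve X̃'(s) = f(X̃(s)) + α(s − kε) + Dβ(s) on [t₀+kε, T+kε], with ‖X̃(t₀+kε) − X(t₀)‖ ≤ c₀. Then for every s ∈ [t₀, T], ‖X̃(s+kε) − X(s)‖ ≤ (c₀ + 2C'kε) e^{L(s−t₀)}. -/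
open MeasureTheory Set RealInnerProductSpace
open scoped ENNReal

noncomputable section

/-- Time-shift trajectory estimate (the estimate following (31)): if `X`
solves `X' = f(X) + α(s) + Dβ(s)` on `[t₀, T]` and `X̃` solves the equation
with the control `α` time-shifted by `kε` on `[t₀+kε, T+kε]`, with initial
distance at most `c₀`, then
`‖X̃(s+kε) − X(s)‖ ≤ (c₀ + 2C'kε) e^{L(s−t₀)}` on `[t₀, T]`. -/
theorem time_shift_trajectory_estimate
    {n m' : ℕ} (A : Set (Euc n)) (B : Set (Euc m'))
    (f : Euc n → Euc n) (D : Euc m' →L[ℝ] Euc n) (L M C' : ℝ)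
    (hA : IsCompact A) (hB : IsCompact B)
    (hL : 0 ≤ L) (hM : 0 < M) (hC' : 0 ≤ C')
    (hfL : ∀ x₁ x₂, ‖f x₁ - f x₂‖ ≤ L * ‖x₁ - x₂‖)
    (hfb : ∀ x, ‖f x‖ ≤ M)
    (hD : ∀ b ∈ B, ‖D b‖ ≤ C')
    (α : ℝ → Euc n) (β : ℝ → Euc m')
    (hα : IsControl A α) (hβ : IsControl B β)
    (t₀ T kε c₀ : ℝ) (ht₀T : t₀ ≤ T) (hkε : 0 ≤ kε) (hc₀ : 0 ≤ c₀)
    (X Xs : ℝ → Euc n)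
    (hXc : ContinuousOn X (Icc t₀ T))
    (hXsc : ContinuousOn Xs (Icc (t₀ + kε) (T + kε)))
    (hX : ∀ s ∈ Icc t₀ T,
      X s = X t₀ + ∫ τ in Ioc t₀ s, (f (X τ) + α τ + D (β τ)))
    (hXs : ∀ s ∈ Icc t₀ T,
      Xs (s + kε) = Xs (t₀ + kε) +
        ∫ τ in Ioc (t₀ + kε) (s + kε), (f (Xs τ) + α (τ - kε) + D (β τ)))
    (hinit : ‖Xs (t₀ + kε) - X t₀‖ ≤ c₀) :
    ∀ s ∈ Icc t₀ T,
      ‖Xs (s + kε) - X s‖ ≤ (c₀ + 2 * C' * kε) * Real.exp (L * (s - t₀)) := by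
  classical
  obtain ⟨Ca, hCa⟩ := hA.isBounded.exists_norm_le
  have hfc : Continuous f := by
    have hlip : LipschitzWith L.toNNReal f :=
      LipschitzWith.of_dist_le_mul fun x y => by
        rw [dist_eq_norm, dist_eq_norm, Real.coe_toNNReal L hL]
        exact hfL x y
    exact hlip.continuous
  have hαii : ∀ a b : ℝ, IntervalIntegrable α volume a b := by
    intro a b
    constructor <;>
      exact MeasureTheory.Measure.integrableOn_of_bounded (by simp)
        hα.1.aestronglyMeasurable (ae_of_all _ fun τ => hCa _ (hα.2 τ))
  have hDβm : Measurable fun τ => D (β τ) := D.continuous.measurable.comp hβ.1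
  have hDβb : ∀ τ : ℝ, ‖D (β τ)‖ ≤ C' := fun τ => hD _ (hβ.2 τ)
  have hDβii : ∀ a b : ℝ, IntervalIntegrable (fun τ => D (β τ)) volume a b := by
    intro a b
    constructor <;>
      exact MeasureTheory.Measure.integrableOn_of_bounded (by simp)
        hDβm.aestronglyMeasurable (ae_of_all _ fun τ => hDβb τ)
  have hDβsm : Measurable fun τ : ℝ => D (β (τ + kε)) :=
    hDβm.comp (measurable_id.add_const kε)
  have hDβsii : ∀ a b : ℝ, IntervalIntegrable (fun τ => D (β (τ + kε))) volume a b := by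
    intro a b
    constructor <;>
      exact MeasureTheory.Measure.integrableOn_of_bounded (by simp)
        hDβsm.aestronglyMeasurable (ae_of_all _ fun τ => hDβb _)
  have hmaps : MapsTo (fun s : ℝ => s + kε) (Icc t₀ T) (Icc (t₀ + kε) (T + kε)) := by
    intro s hs
    simp only [mem_Icc] at hs ⊢
    constructor <;> linarith [hs.1, hs.2]
  have hXsS : ContinuousOn (fun s => Xs (s + kε)) (Icc t₀ T) :=
    hXsc.comp ((continuous_id.add continuous_const).continuousOn) hmaps
  set g : ℝ → ℝ := fun s => ‖Xs (s + kε) - X s‖ with hgdef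
  have hgc : ContinuousOn g (Icc t₀ T) := (hXsS.sub hXc).norm
  have hsub : ∀ s ∈ Icc t₀ T, Icc t₀ s ⊆ Icc t₀ T :=
    fun s hs => Icc_subset_Icc le_rfl hs.2
  have hIfX : ∀ s ∈ Icc t₀ T, IntervalIntegrable (fun τ => f (X τ)) volume t₀ s := by
    intro s hs
    apply ContinuousOn.intervalIntegrable
    rw [uIcc_of_le hs.1]
    exact hfc.comp_continuousOn (hXc.mono (hsub s hs))
  have hIfXs : ∀ s ∈ Icc t₀ T,
      IntervalIntegrable (fun τ => f (Xs (τ + kε))) volume t₀ s := by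
    intro s hs
    apply ContinuousOn.intervalIntegrable
    rw [uIcc_of_le hs.1]
    exact hfc.comp_continuousOn (hXsS.mono (hsub s hs))
  have hgii : ∀ s ∈ Icc t₀ T, IntervalIntegrable g volume t₀ s := by
    intro s hs
    apply ContinuousOn.intervalIntegrable
    rw [uIcc_of_le hs.1]
    exact hgc.mono (hsub s hs)
  -- the key integral identity
  have hkey : ∀ s ∈ Icc t₀ T, Xs (s + kε) - X s =
      (Xs (t₀ + kε) - X t₀)
      + (∫ τ in t₀..s, (f (Xs (τ + kε)) - f (X τ)))
      + ((∫ τ in s..(s + kε), D (β τ)) - ∫ τ in t₀..(t₀ + kε), D (β τ)) := by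
    intro s hs
    have h1 : X s = X t₀ + ((∫ τ in t₀..s, f (X τ)) + (∫ τ in t₀..s, α τ)
        + ∫ τ in t₀..s, D (β τ)) := by
      rw [hX s hs, ← intervalIntegral.integral_of_le hs.1,
        intervalIntegral.integral_add ((hIfX s hs).add (hαii t₀ s)) (hDβii t₀ s),
        intervalIntegral.integral_add (hIfX s hs) (hαii t₀ s)]
    have h2 : Xs (s + kε) = Xs (t₀ + kε) + ((∫ τ in t₀..s, f (Xs (τ + kε)))
        + (∫ τ in t₀..s, α τ) + ∫ τ in t₀..s, D (β (τ + kε))) := by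
      have hle : t₀ + kε ≤ s + kε := by linarith [hs.1]
      have hcv := intervalIntegral.integral_comp_add_right
        (a := t₀) (b := s) (fun τ => f (Xs τ) + α (τ - kε) + D (β τ)) kε
      rw [hXs s hs, ← intervalIntegral.integral_of_le hle, ← hcv]
      simp only [add_sub_cancel_right]
      rw [intervalIntegral.integral_add ((hIfXs s hs).add (hαii t₀ s)) (hDβsii t₀ s),
        intervalIntegral.integral_add (hIfXs s hs) (hαii t₀ s)]
    have e1 : (∫ τ in t₀..s, D (β (τ + kε))) = ∫ τ in (t₀ + kε)..(s + kε), D (β τ) :=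
      intervalIntegral.integral_comp_add_right (fun τ => D (β τ)) kε
    have e2 : (∫ τ in t₀..(t₀ + kε), D (β τ)) + ∫ τ in (t₀ + kε)..(s + kε), D (β τ)
        = ∫ τ in t₀..(s + kε), D (β τ) :=
      intervalIntegral.integral_add_adjacent_intervals (hDβii _ _) (hDβii _ _)
    have e3 : (∫ τ in t₀..s, D (β τ)) + ∫ τ in s..(s + kε), D (β τ)
        = ∫ τ in t₀..(s + kε), D (β τ) :=
      intervalIntegral.integral_add_adjacent_intervals (hDβii _ _) (hDβii _ _)
    have h3 : (∫ τ in t₀..s, D (β (τ + kε)))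
        = (∫ τ in t₀..s, D (β τ)) + ((∫ τ in s..(s + kε), D (β τ))
            - ∫ τ in t₀..(t₀ + kε), D (β τ)) := by
      rw [e1, eq_sub_of_add_eq' e2, ← e3]
      abel
    rw [h1, h2, h3, intervalIntegral.integral_sub (hIfXs s hs) (hIfX s hs)]
    abel
  -- the integral inequality
  have hbound : ∀ s ∈ Icc t₀ T, g s ≤ (c₀ + 2 * C' * kε) + L * ∫ τ in t₀..s, g τ := by
    intro s hs
    have h1 : ‖∫ τ in t₀..s, (f (Xs (τ + kε)) - f (X τ))‖ ≤ L * ∫ τ in t₀..s, g τ := by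
      have hb := intervalIntegral.norm_integral_le_abs_of_norm_le
        (f := fun τ => f (Xs (τ + kε)) - f (X τ)) (g := fun τ => L * g τ)
        (μ := volume) (a := t₀) (b := s)
        (ae_of_all _ fun τ => hfL _ _) ((hgii s hs).const_mul L)
      have hnn : 0 ≤ ∫ τ in t₀..s, L * g τ :=
        intervalIntegral.integral_nonneg hs.1
          (fun τ _ => mul_nonneg hL (norm_nonneg _))
      rw [abs_of_nonneg hnn, intervalIntegral.integral_const_mul] at hb
      exact hb
    have h2 : ‖∫ τ in s..(s + kε), D (β τ)‖ ≤ C' * kε := by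
      have := intervalIntegral.norm_integral_le_of_norm_le_const
        (a := s) (b := s + kε) (C := C') (f := fun τ => D (β τ))
        (fun τ _ => hDβb τ)
      simpa [abs_of_nonneg hkε] using this
    have h3 : ‖∫ τ in t₀..(t₀ + kε), D (β τ)‖ ≤ C' * kε := by
      have := intervalIntegral.norm_integral_le_of_norm_le_const
        (a := t₀) (b := t₀ + kε) (C := C') (f := fun τ => D (β τ))
        (fun τ _ => hDβb τ)
      simpa [abs_of_nonneg hkε] using this
    have hnorm : g s ≤ ‖Xs (t₀ + kε) - X t₀‖
        + ‖∫ τ in t₀..s, (f (Xs (τ + kε)) - f (X τ))‖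
        + ‖(∫ τ in s..(s + kε), D (β τ)) - ∫ τ in t₀..(t₀ + kε), D (β τ)‖ := by
      rw [hgdef]
      simp only []
      rw [hkey s hs]
      exact le_trans (norm_add_le _ _) (by gcongr; exact norm_add_le _ _)
    have h4 : ‖(∫ τ in s..(s + kε), D (β τ)) - ∫ τ in t₀..(t₀ + kε), D (β τ)‖
        ≤ C' * kε + C' * kε := le_trans (norm_sub_le _ _) (add_le_add h2 h3)
    calc g s ≤ _ := hnorm
      _ ≤ c₀ + (L * ∫ τ in t₀..s, g τ) + (C' * kε + C' * kε) :=
          add_le_add (add_le_add hinit h1) h4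
      _ = (c₀ + 2 * C' * kε) + L * ∫ τ in t₀..s, g τ := by ring
  -- Gronwall
  set G : ℝ → ℝ := fun s => ∫ τ in t₀..s, g τ with hGdef
  set φ : ℝ → ℝ := fun s => (c₀ + 2 * C' * kε) + L * G s with hφdef
  have hGint : IntegrableOn g (uIcc t₀ T) volume := by
    rw [uIcc_of_le ht₀T]
    exact hgc.integrableOn_Icc
  have hGc : ContinuousOn G (Icc t₀ T) := by
    rw [← uIcc_of_le ht₀T]
    exact intervalIntegral.continuousOn_primitive_interval hGint
  have hφc : ContinuousOn φ (Icc t₀ T) :=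
    continuousOn_const.add (continuousOn_const.mul hGc)
  have hφ' : ∀ b ∈ Ico t₀ T, HasDerivWithinAt φ (L * g b) (Ici b) b := by
    intro b hb
    have hbI : b ∈ Icc t₀ T := ⟨hb.1, hb.2.le⟩
    have hmeas : StronglyMeasurableAtFilter g (nhdsWithin b (Ioi b)) := by
      refine ⟨Ioc b T, ?_, ?_⟩
      · exact mem_nhdsWithin.mpr ⟨Iio T, isOpen_Iio, hb.2, fun x hx => ⟨hx.2, hx.1.le⟩⟩
      · exact (hgc.mono (fun x hx => ⟨le_trans hb.1 hx.1.le, hx.2⟩)).aestronglyMeasurable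
          measurableSet_Ioc
    have hcb : ContinuousWithinAt g (Ioi b) b := by
      have hc1 : ContinuousWithinAt g (Icc b T) b :=
        (hgc b hbI).mono (Icc_subset_Icc_left hb.1)
      have hc2 : ContinuousWithinAt g (Ici b) b := by
        rw [ContinuousWithinAt, ← nhdsWithin_Icc_eq_nhdsGE hb.2]
        exact hc1
      exact hc2.mono Ioi_subset_Ici_self
    have hG' : HasDerivWithinAt G (g b) (Ici b) b :=
      intervalIntegral.integral_hasDerivWithinAt_right (hgii b hbI) hmeas hcb
    exact (hG'.const_mul L).const_add _
  have hGnn : ∀ s ∈ Icc t₀ T, 0 ≤ G s := fun s hs =>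
    intervalIntegral.integral_nonneg hs.1 (fun τ _ => norm_nonneg _)
  have hφnn : ∀ s ∈ Icc t₀ T, 0 ≤ φ s := by
    intro s hs
    have h1 : 0 ≤ c₀ + 2 * C' * kε := by positivity
    have h2 := mul_nonneg hL (hGnn s hs)
    show 0 ≤ c₀ + 2 * C' * kε + L * G s
    linarith
  have hφt₀ : ‖φ t₀‖ ≤ c₀ + 2 * C' * kε := by
    have hGt₀ : G t₀ = 0 := intervalIntegral.integral_same
    have : φ t₀ = c₀ + 2 * C' * kε := by rw [hφdef]; simp [hGt₀]
    rw [this, Real.norm_of_nonneg (by positivity)]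
  have hgronbd : ∀ t ∈ Ico t₀ T, ‖L * g t‖ ≤ L * ‖φ t‖ + 0 := by
    intro t ht
    have htI : t ∈ Icc t₀ T := ⟨ht.1, ht.2.le⟩
    have hgφ : g t ≤ φ t := hbound t htI
    rw [add_zero, Real.norm_of_nonneg (mul_nonneg hL (norm_nonneg _)),
      Real.norm_of_nonneg (hφnn t htI)]
    exact mul_le_mul_of_nonneg_left hgφ hL
  have hgron := norm_le_gronwallBound_of_norm_deriv_right_le
    (f := φ) (f' := fun t => L * g t) (δ := c₀ + 2 * C' * kε) (K := L) (ε := 0)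
    (a := t₀) (b := T) hφc hφ' hφt₀ hgronbd
  intro s hs
  have h1 := hgron s hs
  rw [gronwallBound_ε0, Real.norm_of_nonneg (hφnn s hs)] at h1
  calc ‖Xs (s + kε) - X s‖ = g s := rfl
    _ ≤ φ s := hbound s hs
    _ ≤ (c₀ + 2 * C' * kε) * Real.exp (L * (s - t₀)) := h1


end
end
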